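/- arXiv:0709.1642 — 10 statements merged into one kernel-verified Lean document; each statement's English description precedes it below -/
import Mathlib

section
/- Let p, q be coprime integers with 0 < p < q. Define w : ℕ → ℤ by w(i) = ⌈(i+1)p/q⌉ − ⌈i·p/q⌉ for 0 ≤ i ≤ q−2, w(q−1) = 1, and w(i) = 0 for i ≥ q (so (w(0),…,w(q−1)) is the word 1·z_{p,q}·1, padded by zeros). Then for every n with 1 ≤ n ≤ q−1, the shifted sequence (w(n+i))_{i≥0} is lexicographically strictly smaller than (w(i))_{i≥0}; i.e., the word 1 z_{p,q} 1 is lexicographically greater than all of its proper suffixes. -/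
/-- The word `1 z_{p,q} 1` (for coprime `0 < p < q`), padded by zeros:
`w i = ⌈(i+1)p/q⌉ − ⌈ip/q⌉` for `0 ≤ i ≤ q−2`, `w (q−1) = 1`, and `w i = 0` for `i ≥ q`. -/
def oneCentralOne (p q : ℕ) (i : ℕ) : ℤ :=
  if i + 2 ≤ q then ⌈(((i : ℚ) + 1) * p) / q⌉ - ⌈((i : ℚ) * p) / q⌉
  else if i + 1 = q then 1
  else 0

/-!
Let `S i = ⌈i p / q⌉` for `i < q` and `S i = p + 1` for `i ≥ q`; these are the prefix sums of
`1 z_{p,q} 1`. Every window sum `S (n + j) - S j` of length `n` is at most `S n = ⌈n p / q⌉`: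
while `n + j < q` this is subadditivity of the ceiling, and once `n + j ≥ q` it is because
`n p / q` is not an integer when `p, q` are coprime and `0 < n < q`. The window at `j = q` sums
to `0 < S n`, so at the first `j` where the window sum drops below `S n` the shifted word falls
strictly below the word, after agreeing with it before that position.
-/

theorem exists_shift_lt_of_window_sum_le (w F : ℕ → ℤ) (hw : ∀ i, w i = F (i + 1) - F i)
    {n N : ℕ} (hle : ∀ j, F (n + j) - F j ≤ F n - F 0) (hlt : F (n + N) - F N < F n - F 0) :
    ∃ m, (∀ i < m, w (n + i) = w i) ∧ w (n + m) < w m := by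
  have hex : ∃ k, F (n + (k + 1)) - F (k + 1) < F n - F 0 := by
    obtain _ | k := N
    · simp at hlt
    · exact ⟨k, hlt⟩
  have hconst : ∀ i ≤ Nat.find hex, F (n + i) - F i = F n - F 0 := by
    rintro (_ | i) hi
    · simp
    · exact le_antisymm (hle _) (not_lt.mp (Nat.find_min hex hi))
  refine ⟨Nat.find hex, fun i hi => ?_, ?_⟩
  · have h₀ := hconst i hi.le
    have h₁ := hconst (i + 1) hi
    rw [hw, hw, add_assoc]
    omega
  · have h₀ := hconst _ le_rfl
    have h₁ := Nat.find_spec hex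
    rw [hw, hw, add_assoc]
    omega

theorem lt_ceil_add_ceil_of_le_add {α : Type*} [Field α] [LinearOrder α] [IsStrictOrderedRing α]
    [FloorRing α] {x y : α} {z : ℤ} (hx : x < ⌈x⌉) (hxy : z ≤ x + y) :
    z < ⌈x⌉ + ⌈y⌉ := by
  have : ((z - ⌈x⌉ : ℤ) : α) < y := by push_cast; linarith
  linarith [Int.lt_ceil.mpr this]

theorem Nat.Coprime.lt_ceil_mul_div {p q n : ℕ} (hcop : p.Coprime q) (hn : 0 < n) (hnq : n < q) :
    (n * p / q : ℚ) < ⌈(n * p / q : ℚ)⌉ := by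
  refine (Int.le_ceil _).lt_of_ne fun heq => ?_
  have hq : (q : ℚ) ≠ 0 := by exact_mod_cast (by omega : q ≠ 0)
  have hdvd : (q : ℤ) ∣ ((n * p : ℕ) : ℤ) := by
    refine ⟨⌈(n * p / q : ℚ)⌉, ?_⟩
    have := (div_eq_iff hq).mp heq
    push_cast
    exact_mod_cast this.trans (mul_comm _ _)
  have := Nat.le_of_dvd hn (hcop.symm.dvd_of_dvd_mul_right (Int.natCast_dvd_natCast.mp hdvd))
  omega

theorem ceil_pred_mul_div_of_lt {p q : ℕ} (hpq : p < q) : ⌈((q - 1 : ℕ) * p / q : ℚ)⌉ = p := by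
  have hq : (0 : ℚ) < q := by exact_mod_cast (by omega : 0 < q)
  have hpq' : (p : ℚ) < q := by exact_mod_cast hpq
  rw [Int.ceil_eq_iff, Nat.cast_sub (by omega), Nat.cast_one, sub_mul, one_mul, sub_div,
    mul_div_cancel_left₀ _ hq.ne']
  push_cast
  constructor
  · linarith [(div_lt_one hq).mpr hpq']
  · linarith [show (0 : ℚ) ≤ p / q by positivity]

def oneCentralOnePrefixSum (p q i : ℕ) : ℤ := if q ≤ i then p + 1 else ⌈(i * p / q : ℚ)⌉

namespace oneCentralOnePrefixSum

variable {p q : ℕ}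

theorem of_lt {i : ℕ} (hi : i < q) : oneCentralOnePrefixSum p q i = ⌈(i * p / q : ℚ)⌉ :=
  if_neg (not_le.mpr hi)

theorem of_le {i : ℕ} (hi : q ≤ i) : oneCentralOnePrefixSum p q i = p + 1 :=
  if_pos hi

theorem zero (hq : 0 < q) : oneCentralOnePrefixSum p q 0 = 0 := by
  simp [of_lt hq]

theorem _root_.oneCentralOne_eq_prefixSum_sub (hpq : p < q) (i : ℕ) :
    oneCentralOne p q i = oneCentralOnePrefixSum p q (i + 1) - oneCentralOnePrefixSum p q i := by
  unfold oneCentralOne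
  split_ifs with h₂ h₁
  · rw [of_lt (by omega), of_lt (by omega)]
    push_cast
    rfl
  · obtain rfl : q = i + 1 := h₁.symm
    rw [of_le le_rfl, of_lt (by omega), ← ceil_pred_mul_div_of_lt hpq]
    simp
  · rw [of_le (by omega), of_le (by omega), sub_self]

theorem window_sum_le (hcop : p.Coprime q) {n : ℕ} (hn : 0 < n) (hnq : n < q) (j : ℕ) :
    oneCentralOnePrefixSum p q (n + j) - oneCentralOnePrefixSum p q j ≤ ⌈(n * p / q : ℚ)⌉ := by
  have hceil := hcop.lt_ceil_mul_div hn hnq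
  rcases lt_or_ge j q with hj | hj
  · rw [of_lt hj, sub_le_iff_le_add]
    rcases lt_or_ge (n + j) q with hnj | hnj
    · rw [of_lt hnj, Nat.cast_add, add_mul, add_div]
      exact Int.ceil_add_le _ _
    · rw [of_le hnj, Int.add_one_le_iff]
      refine lt_ceil_add_ceil_of_le_add hceil ?_
      have hq : (0 : ℚ) < q := by exact_mod_cast (by omega : 0 < q)
      rw [← add_div, le_div_iff₀ hq, ← add_mul, mul_comm]
      push_cast
      exact mul_le_mul_of_nonneg_right (by exact_mod_cast hnj) (Nat.cast_nonneg p)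
  · rw [of_le hj, of_le (by omega), sub_self]
    exact_mod_cast (show (0 : ℚ) ≤ n * p / q by positivity).trans hceil.le

end oneCentralOnePrefixSum

open oneCentralOnePrefixSum in
theorem oneCentralOne_gt_proper_suffixes_general (p q : ℕ) (hpq : p < q)
    (hcop : Nat.Coprime p q) :
    ∀ n : ℕ, 1 ≤ n → n ≤ q - 1 →
      ∃ m : ℕ, (∀ i : ℕ, i < m → oneCentralOne p q (n + i) = oneCentralOne p q i) ∧
        oneCentralOne p q (n + m) < oneCentralOne p q m := by
  intro n hn hn_le
  have hnq : n < q := by omega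
  have hwindow :
      oneCentralOnePrefixSum p q n - oneCentralOnePrefixSum p q 0 = ⌈(n * p / q : ℚ)⌉ := by
    rw [of_lt hnq, zero (by omega), sub_zero]
  refine exists_shift_lt_of_window_sum_le _ _ (oneCentralOne_eq_prefixSum_sub hpq) (N := q)
    (fun j => hwindow ▸ window_sum_le hcop hn hnq j) ?_
  rw [hwindow, of_le (by omega), of_le le_rfl, sub_self]
  exact_mod_cast (show (0 : ℚ) ≤ n * p / q by positivity).trans_lt (hcop.lt_ceil_mul_div hn hnq)

/-- For coprime integers `0 < p < q`, the word `1 z_{p,q} 1` is lexicographically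
greater than all of its proper suffixes. -/
theorem oneCentralOne_gt_proper_suffixes (p q : ℕ) (hp : 0 < p) (hpq : p < q)
    (hcop : Nat.Coprime p q) :
    ∀ n : ℕ, 1 ≤ n → n ≤ q - 1 →
      ∃ m : ℕ, (∀ i : ℕ, i < m → oneCentralOne p q (n + i) = oneCentralOne p q i) ∧
        oneCentralOne p q (n + m) < oneCentralOne p q m :=
  oneCentralOne_gt_proper_suffixes_general p q hpq hcop
end

section
/- Let p, q be coprime integers with 0 < p < q. Define v : ℕ → ℤ by v(0) = 1 and v(n) = ⌊(n+1)p/q⌋ − ⌊n·p/q⌋ for n ≥ 1 (so v is the infinite word 1·(z_{p,q}10)^ω). Then for every n ≥ 1, the shifted sequence (v(n+i))_{i≥0} is lexicographically strictly smaller than (v(i))_{i≥0}; i.e., 1(z_{p,q}10)^ω is lexicographically greater than all of its proper suffixes. -/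
/-!
Let `L k = ⌊k p / q⌋`. The word telescopes against `L`: its prefix sums are `L m + 1`, while the
factor of length `m` starting at `n ≥ 1` sums to `L (n + m) - L n ≤ L m + 1`, with strict
inequality at `m = q` since `L` is additive there. A word whose prefix sums never exceed those
of another, and fall short somewhere, is lexicographically smaller: at the first disagreement
the larger letter would make its prefix sum overtake.
-/

open Finset

/-- The infinite word `1·(z_{p,q}10)^ω` (for coprime `0 < p < q`):
`v 0 = 1` and `v n = ⌊(n+1)p/q⌋ − ⌊np/q⌋` for `n ≥ 1`. -/
def oneCentralOneZero (p q : ℕ) (n : ℕ) : ℤ :=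
  if n = 0 then 1
  else ⌊(((n : ℚ) + 1) * p) / q⌋ - ⌊((n : ℚ) * p) / q⌋

section PrefixSums

variable {α : Type*} [AddCommMonoid α] [LinearOrder α] [IsOrderedCancelAddMonoid α]

theorem Pi.toLex_le_of_sum_range_le {u w : ℕ → α}
    (h : ∀ m, ∑ i ∈ range m, u i ≤ ∑ i ∈ range m, w i) : toLex u ≤ toLex w := by
  refine not_lt.mp fun ⟨m, hagree, hlt⟩ => (h (m + 1)).not_gt ?_
  have hprefix : ∑ i ∈ range m, w i = ∑ i ∈ range m, u i :=
    sum_congr rfl fun i hi => hagree i (mem_range.mp hi)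
  rw [sum_range_succ, sum_range_succ, hprefix]
  exact (add_lt_add_iff_left _).mpr hlt

theorem Pi.toLex_lt_of_sum_range_le_of_lt {u w : ℕ → α}
    (h : ∀ m, ∑ i ∈ range m, u i ≤ ∑ i ∈ range m, w i) {m : ℕ}
    (hm : ∑ i ∈ range m, u i < ∑ i ∈ range m, w i) : toLex u < toLex w :=
  (toLex_le_of_sum_range_le h).lt_of_ne fun he => hm.ne (by rw [toLex_inj.mp he])

end PrefixSums

namespace OneCentralOneZero

/-- The number of `1`s among the first `k` letters of the lower mechanical word of slope `p/q`. -/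
def lowerHeight (p q k : ℕ) : ℤ := ⌊((k : ℚ) * p) / q⌋

variable {p q : ℕ}

theorem lowerHeight_one (hpq : p < q) : lowerHeight p q 1 = 0 := by
  have hq : (0 : ℚ) < q := by exact_mod_cast (Nat.zero_le p).trans_lt hpq
  rw [lowerHeight, Nat.cast_one, one_mul, Int.floor_eq_zero_iff]
  exact ⟨by positivity, (div_lt_one hq).mpr (by exact_mod_cast hpq)⟩

theorem lowerHeight_self (hq : q ≠ 0) : lowerHeight p q q = p := by
  rw [lowerHeight, mul_div_cancel_left₀ _ (Nat.cast_ne_zero.mpr hq), Int.floor_natCast]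

theorem lowerHeight_add_self (hq : q ≠ 0) (k : ℕ) :
    lowerHeight p q (k + q) = lowerHeight p q k + lowerHeight p q q := by
  have hsplit : ((k + q : ℕ) : ℚ) * p / q = (k : ℚ) * p / q + (p : ℕ) := by
    push_cast
    field_simp
  rw [lowerHeight, hsplit, Int.floor_add_natCast, lowerHeight_self hq]
  rfl

theorem lowerHeight_add_le (a b : ℕ) :
    lowerHeight p q (a + b) ≤ lowerHeight p q a + lowerHeight p q b + 1 := by
  have hsplit : ((a + b : ℕ) : ℚ) * p / q = (a : ℚ) * p / q + (b : ℚ) * p / q := by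
    push_cast
    rw [add_mul, add_div]
  have := Int.le_floor_add_floor ((a : ℚ) * p / q) ((b : ℚ) * p / q)
  unfold lowerHeight
  rw [hsplit]
  linarith

theorem _root_.oneCentralOneZero_zero : oneCentralOneZero p q 0 = 1 := rfl

theorem _root_.oneCentralOneZero_of_ne_zero {n : ℕ} (hn : n ≠ 0) :
    oneCentralOneZero p q n = lowerHeight p q (n + 1) - lowerHeight p q n := by
  simp only [oneCentralOneZero, if_neg hn, lowerHeight, Nat.cast_add, Nat.cast_one]

theorem sum_range_shift (n m : ℕ) (hn : n ≠ 0) :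
    ∑ i ∈ range m, oneCentralOneZero p q (n + i) = lowerHeight p q (n + m) - lowerHeight p q n := by
  rw [sum_congr rfl fun i _ => oneCentralOneZero_of_ne_zero (by omega : n + i ≠ 0)]
  exact sum_range_sub (fun i => lowerHeight p q (n + i)) m

theorem sum_range (hpq : p < q) {m : ℕ} (hm : m ≠ 0) :
    ∑ i ∈ range m, oneCentralOneZero p q i = lowerHeight p q m + 1 := by
  obtain ⟨k, rfl⟩ := Nat.exists_eq_succ_of_ne_zero hm
  rw [sum_range_succ', oneCentralOneZero_zero]
  simp only [Nat.succ_eq_add_one, add_comm _ 1]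
  rw [sum_range_shift 1 k one_ne_zero, lowerHeight_one hpq, sub_zero]

theorem sum_range_shift_le (hpq : p < q) {n : ℕ} (hn : n ≠ 0) (m : ℕ) :
    ∑ i ∈ range m, oneCentralOneZero p q (n + i) ≤ ∑ i ∈ range m, oneCentralOneZero p q i := by
  rcases eq_or_ne m 0 with rfl | hm
  · simp
  rw [sum_range_shift n m hn, sum_range hpq hm]
  linarith [lowerHeight_add_le (p := p) (q := q) n m]

theorem sum_range_shift_lt (hpq : p < q) {n : ℕ} (hn : n ≠ 0) :
    ∑ i ∈ range q, oneCentralOneZero p q (n + i) < ∑ i ∈ range q, oneCentralOneZero p q i := by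
  have hq : q ≠ 0 := ((Nat.zero_le p).trans_lt hpq).ne'
  rw [sum_range_shift n q hn, sum_range hpq hq, lowerHeight_add_self hq]
  linarith

end OneCentralOneZero

open OneCentralOneZero in
theorem oneCentralOneZero_gt_proper_suffixes_general (p q : ℕ) (hpq : p < q) :
    ∀ n : ℕ, 1 ≤ n →
      ∃ m : ℕ, (∀ i : ℕ, i < m → oneCentralOneZero p q (n + i) = oneCentralOneZero p q i) ∧
        oneCentralOneZero p q (n + m) < oneCentralOneZero p q m := by
  intro n h1n
  have hn : n ≠ 0 := Nat.one_le_iff_ne_zero.mp h1n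
  exact Pi.toLex_lt_of_sum_range_le_of_lt (u := fun i => oneCentralOneZero p q (n + i))
    (sum_range_shift_le hpq hn) (sum_range_shift_lt hpq hn)

/-- For coprime integers `0 < p < q`, the infinite word `1(z_{p,q}10)^ω` is
lexicographically greater than all of its proper suffixes. -/
theorem oneCentralOneZero_gt_proper_suffixes (p q : ℕ) (hp : 0 < p) (hpq : p < q)
    (hcop : Nat.Coprime p q) :
    ∀ n : ℕ, 1 ≤ n →
      ∃ m : ℕ, (∀ i : ℕ, i < m → oneCentralOneZero p q (n + i) = oneCentralOneZero p q i) ∧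
        oneCentralOneZero p q (n + m) < oneCentralOneZero p q m :=
  oneCentralOneZero_gt_proper_suffixes_general p q hpq
end

section
/- Let a, b be integers with 0 ≤ a < b and let α ∈ (0,1) be irrational. Define u : ℕ → ℤ by u(n) = a + (b − a)·(⌈α(n+1)⌉ − ⌈αn⌉) (the upper mechanical word s'_{α,0} written over the alphabet {a, b}). Then there exists a unique β ∈ (b, b+1) whose greedy β-expansion of 1 has digit sequence u, i.e., with r(0) = 1 and r(k+1) = β·r(k) − ⌊β·r(k)⌋ one has ⌊β·r(n)⌋ = u(n) for all n ≥ 0; moreover this β satisfies ∑_{n=0}^∞ u(n)·β^{−(n+1)} = 1. -/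
/-- The greedy β-expansion orbit of 1: `r 0 = 1`, `r (k+1) = β·r k − ⌊β·r k⌋`. -/
noncomputable def betaOrbit (β : ℝ) : ℕ → ℝ
  | 0 => 1
  | k + 1 => β * betaOrbit β k - ⌊β * betaOrbit β k⌋

/-- The upper mechanical word of slope `α` (intercept 0) over the alphabet `{a, b}`:
`u n = a + (b − a)·(⌈α(n+1)⌉ − ⌈αn⌉)`. -/
noncomputable def upperMechanical (a b : ℤ) (α : ℝ) (n : ℕ) : ℤ :=
  a + (b - a) * (⌈α * ((n : ℝ) + 1)⌉ - ⌈α * (n : ℝ)⌉)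

/-!
Write `u` for the word and `g x = ∑ₙ u n x^(n+1)`, a power series that is strictly increasing
on `[0, 1)`. For any β, `∑_{k<n} ⌊β r_k⌋ β^{-(k+1)} = 1 - r_n β^{-n}`, so a β with digit
sequence `u` satisfies `g β⁻¹ = 1`; this gives the series identity and uniqueness.

For existence pick `x ∈ (0, 1)` with `g x = 1` and put `β = x⁻¹`. The remainders
`t m = ∑ₖ u (m+k) x^(k+1)` satisfy `β t m = u m + t (m+1)` and `t 0 = 1`, so they are the
greedy orbit of 1 with digits `u` as soon as `t m < 1` for `m ≥ 1`. Subadditivity of `⌈·⌉`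
shows that no prefix of a shift of `u` has a larger sum than the prefix of `u` of the same
length, and some prefix has a strictly smaller one, since otherwise `⌈α k m⌉ ≥ k ⌈α m⌉` for
all `k`, forcing `α m ∈ ℤ`. Abel summation against the decreasing weights `x^(k+1)` turns
this into `t m < t 0`. Finally `β = u 0 + t 1 = b + t 1` lies in `(b, b + 1)`.
-/

open Finset Filter Topology

theorem betaOrbit_succ (β : ℝ) (n : ℕ) : betaOrbit β (n + 1) = Int.fract (β * betaOrbit β n) :=
  rfl

theorem betaOrbit_mem_Icc (β : ℝ) (n : ℕ) : betaOrbit β n ∈ Set.Icc 0 1 := by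
  cases n with
  | zero => simp [betaOrbit]
  | succ n =>
    rw [betaOrbit_succ]
    exact ⟨Int.fract_nonneg _, (Int.fract_lt_one _).le⟩

theorem sum_range_floor_mul_betaOrbit_div_pow {β : ℝ} (hβ : β ≠ 0) (n : ℕ) :
    ∑ k ∈ range n, (⌊β * betaOrbit β k⌋ : ℝ) / β ^ (k + 1) = 1 - betaOrbit β n / β ^ n := by
  induction n with
  | zero => simp [betaOrbit]
  | succ n ih =>
    rw [sum_range_succ, ih, betaOrbit_succ, Int.fract]
    field_simp
    ring

theorem hasSum_floor_mul_betaOrbit_div_pow {β : ℝ} (hβ : 1 < β) :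
    HasSum (fun n ↦ (⌊β * betaOrbit β n⌋ : ℝ) / β ^ (n + 1)) 1 := by
  have hβ0 : 0 < β := one_pos.trans hβ
  have hdigit (n : ℕ) : 0 ≤ (⌊β * betaOrbit β n⌋ : ℝ) / β ^ (n + 1) := by
    have := (betaOrbit_mem_Icc β n).1
    positivity
  rw [hasSum_iff_tendsto_nat_of_nonneg hdigit,
    funext (sum_range_floor_mul_betaOrbit_div_pow hβ0.ne')]
  have hrem : Tendsto (fun n ↦ betaOrbit β n / β ^ n) atTop (𝓝 0) := by
    refine squeeze_zero (fun n ↦ div_nonneg (betaOrbit_mem_Icc β n).1 (by positivity))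
      (fun n ↦ ?_)
      (tendsto_pow_atTop_nhds_zero_of_lt_one (by positivity) (inv_lt_one_of_one_lt₀ hβ))
    rw [inv_pow, ← one_div]
    gcongr
    exact (betaOrbit_mem_Icc β n).2
  simpa using hrem.const_sub 1

theorem betaOrbit_eq_of_remainders {β : ℝ} {d : ℕ → ℤ} {T : ℕ → ℝ} (hT0 : T 0 = 1)
    (hT : ∀ m, T (m + 1) ∈ Set.Ico 0 1) (hrec : ∀ m, β * T m = d m + T (m + 1)) :
    betaOrbit β = T := by
  funext n
  induction n with
  | zero => exact hT0.symm
  | succ n ih =>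
    rw [betaOrbit_succ, ih, hrec, Int.fract_intCast_add, Int.fract_eq_self.mpr (hT n)]

theorem floor_mul_betaOrbit_eq_of_remainders {β : ℝ} {d : ℕ → ℤ} {T : ℕ → ℝ} (hT0 : T 0 = 1)
    (hT : ∀ m, T (m + 1) ∈ Set.Ico 0 1) (hrec : ∀ m, β * T m = d m + T (m + 1)) (n : ℕ) :
    ⌊β * betaOrbit β n⌋ = d n := by
  rw [betaOrbit_eq_of_remainders hT0 hT hrec, hrec, Int.floor_intCast_add,
    Int.floor_eq_zero_iff.mpr (hT n), add_zero]

theorem sum_range_mul_eq_sum_range_partialSums {R : Type*} [CommRing R] (d w : ℕ → R) (N : ℕ) :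
    ∑ k ∈ range N, d k * w k =
      ∑ j ∈ range N, (∑ k ∈ range (j + 1), d k) * (w j - w (j + 1)) +
        (∑ k ∈ range N, d k) * w N := by
  induction N with
  | zero => simp
  | succ N ih =>
    rw [sum_range_succ, ih, sum_range_succ, sum_range_succ _ N]
    ring

theorem tsum_mul_neg_of_partialSums_nonpos {d w : ℕ → ℝ} (hw : StrictAnti w) (hw0 : ∀ k, 0 ≤ w k)
    (hdw : Summable fun k ↦ d k * w k) (hD : ∀ j, ∑ k ∈ range j, d k ≤ 0)
    (hD' : ∃ j, ∑ k ∈ range j, d k < 0) : ∑' k, d k * w k < 0 := by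
  obtain ⟨i, hi⟩ := hD'
  rcases i with _ | i
  · simp at hi
  have hterm (j : ℕ) : (∑ k ∈ range (j + 1), d k) * (w j - w (j + 1)) ≤ 0 :=
    mul_nonpos_of_nonpos_of_nonneg (hD _) (sub_nonneg.mpr (hw (Nat.lt_succ_self j)).le)
  have hbound : ∀ N ≥ i + 1, ∑ k ∈ range N, d k * w k ≤
      (∑ k ∈ range (i + 1), d k) * (w i - w (i + 1)) := by
    intro N hN
    rw [sum_range_mul_eq_sum_range_partialSums, ← add_sum_erase _ _ (mem_range.mpr hN)]
    have := sum_nonpos fun j (_ : j ∈ (range N).erase i) ↦ hterm j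
    linarith [mul_nonpos_of_nonpos_of_nonneg (hD N) (hw0 N)]
  calc ∑' k, d k * w k ≤ (∑ k ∈ range (i + 1), d k) * (w i - w (i + 1)) :=
        le_of_tendsto hdw.hasSum.tendsto_sum_nat (eventually_atTop.mpr ⟨i + 1, hbound⟩)
    _ < 0 := mul_neg_of_neg_of_pos hi (sub_pos.mpr (hw (Nat.lt_succ_self i)))

/-- When `u` is the digit sequence of the greedy β-expansion of 1, `tailSeries u m β⁻¹` is the
remainder `betaOrbit β m`. -/
noncomputable def tailSeries (u : ℕ → ℤ) (m : ℕ) (x : ℝ) : ℝ :=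
  ∑' k, (u (m + k) : ℝ) * x ^ (k + 1)

section TailSeries

variable {u : ℕ → ℤ} {B : ℤ} {x : ℝ}

theorem summable_tailSeries (hu : ∀ n, u n ∈ Set.Icc 0 B) (hx0 : 0 ≤ x) (hx1 : x < 1) (m : ℕ) :
    Summable fun k ↦ (u (m + k) : ℝ) * x ^ (k + 1) := by
  refine Summable.of_nonneg_of_le (fun k ↦ ?_) (fun k ↦ ?_)
    ((summable_geometric_of_lt_one hx0 hx1).mul_left (B : ℝ))
  · have := (hu (m + k)).1
    positivity
  · have hle : x ^ (k + 1) ≤ x ^ k := pow_le_pow_of_le_one hx0 hx1.le k.le_succ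
    have hB : (u (m + k) : ℝ) ≤ B := by exact_mod_cast (hu (m + k)).2
    have hu0 : (0 : ℝ) ≤ u (m + k) := Int.cast_nonneg (hu (m + k)).1
    calc (u (m + k) : ℝ) * x ^ (k + 1) ≤ B * x ^ k :=
        mul_le_mul hB hle (by positivity) (hu0.trans hB)

theorem tailSeries_nonneg (hu : ∀ n, u n ∈ Set.Icc 0 B) (hx0 : 0 ≤ x) (m : ℕ) :
    0 ≤ tailSeries u m x :=
  tsum_nonneg fun k ↦ mul_nonneg (Int.cast_nonneg (hu (m + k)).1) (by positivity)

theorem tailSeries_eq_add (hu : ∀ n, u n ∈ Set.Icc 0 B) (hx0 : 0 ≤ x) (hx1 : x < 1) (m : ℕ) :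
    tailSeries u m x = u m * x + x * tailSeries u (m + 1) x := by
  rw [tailSeries, (summable_tailSeries hu hx0 hx1 m).tsum_eq_zero_add, tailSeries, ← tsum_mul_left]
  congr 1
  · simp
  · refine tsum_congr fun k ↦ ?_
    rw [← add_assoc, add_right_comm]
    ring

theorem mul_pow_le_tailSeries (hu : ∀ n, u n ∈ Set.Icc 0 B) (hx0 : 0 ≤ x) (hx1 : x < 1)
    (m k : ℕ) : u (m + k) * x ^ (k + 1) ≤ tailSeries u m x :=
  (summable_tailSeries hu hx0 hx1 m).le_tsum k fun j _ ↦
    mul_nonneg (Int.cast_nonneg (hu (m + j)).1) (by positivity)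

theorem strictMonoOn_tailSeries (hu : ∀ n, u n ∈ Set.Icc 0 B) {m : ℕ} (hm : 0 < u m) :
    StrictMonoOn (tailSeries u m) (Set.Ico 0 1) := by
  rintro x ⟨hx0, hx1⟩ y ⟨hy0, hy1⟩ hxy
  refine Summable.tsum_lt_tsum (i := 0) (fun k ↦ ?_) ?_ (summable_tailSeries hu hx0 hx1 m)
    (summable_tailSeries hu hy0 hy1 m)
  · exact mul_le_mul_of_nonneg_left (pow_le_pow_left₀ hx0 hxy.le _)
      (Int.cast_nonneg (hu (m + k)).1)
  · simpa using mul_lt_mul_of_pos_left hxy (by exact_mod_cast hm : (0 : ℝ) < u m)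

theorem continuousOn_tailSeries (hu : ∀ n, u n ∈ Set.Icc 0 B) {r : ℝ} (hr : r < 1) (m : ℕ) :
    ContinuousOn (tailSeries u m) (Set.Icc 0 r) := by
  rcases lt_or_ge r 0 with hr0 | hr0
  · simp [Set.Icc_eq_empty_of_lt hr0]
  refine continuousOn_tsum (fun k ↦ by fun_prop) (summable_tailSeries hu hr0 hr m)
    fun k y ⟨hy0, hyr⟩ ↦ ?_
  have hu0 : (0 : ℝ) ≤ u (m + k) := Int.cast_nonneg (hu (m + k)).1
  rw [norm_mul, Real.norm_of_nonneg hu0, Real.norm_of_nonneg (by positivity)]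
  exact mul_le_mul_of_nonneg_left (pow_le_pow_left₀ hy0 hyr _) hu0

theorem exists_one_lt_add_pow (n : ℕ) : ∃ x ∈ Set.Ioo (0 : ℝ) 1, 1 < x + x ^ n := by
  have hnear : ∀ᶠ x in 𝓝[<] (1 : ℝ), 1 < x + x ^ n ∧ 0 < x := by
    refine nhdsWithin_le_nhds (Filter.Eventually.and ?_ (lt_mem_nhds one_pos))
    exact continuousAt_const.eventually_lt (f := fun _ ↦ (1 : ℝ)) (g := fun x ↦ x + x ^ n)
      (by fun_prop) (by norm_num)
  obtain ⟨x, ⟨h1, h0⟩, hx1⟩ := (hnear.and self_mem_nhdsWithin).exists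
  exact ⟨x, ⟨h0, hx1⟩, h1⟩

theorem exists_tailSeries_eq_one (hu : ∀ n, u n ∈ Set.Icc 0 B) (h0 : 1 ≤ u 0) {n : ℕ}
    (hn : 1 ≤ u (1 + n)) : ∃ x ∈ Set.Ioo (0 : ℝ) 1, tailSeries u 0 x = 1 := by
  obtain ⟨r, ⟨hr0, hr1⟩, hr⟩ := exists_one_lt_add_pow (n + 2)
  have hlarge : 1 < tailSeries u 0 r := by
    have h0' : (1 : ℝ) ≤ u 0 := by exact_mod_cast h0
    have hn' : (1 : ℝ) ≤ u (1 + n) := by exact_mod_cast hn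
    have htail := mul_pow_le_tailSeries hu hr0.le hr1 1 n
    rw [tailSeries_eq_add hu hr0.le hr1, zero_add]
    nlinarith [pow_pos hr0 (n + 1), pow_succ' r (n + 1)]
  obtain ⟨x, ⟨hx0, hxr⟩, hx⟩ := intermediate_value_Icc hr0.le (continuousOn_tailSeries hu hr1 0)
    ⟨by simp [tailSeries], hlarge.le⟩
  refine ⟨x, ⟨lt_of_le_of_ne hx0 ?_, hxr.trans_lt hr1⟩, hx⟩
  rintro rfl
  simp [tailSeries] at hx

theorem tailSeries_inv_eq_one_of_floor_eq {β : ℝ} {d : ℕ → ℤ} (hβ : 1 < β)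
    (hd : ∀ n, ⌊β * betaOrbit β n⌋ = d n) : tailSeries d 0 β⁻¹ = 1 := by
  simpa [hd, tailSeries, div_eq_mul_inv] using (hasSum_floor_mul_betaOrbit_div_pow hβ).tsum_eq

end TailSeries

section UpperMechanical

variable {a b : ℤ} {α : ℝ}

theorem ceil_mul_add_one_sub_ceil_mul_mem_Icc (h0 : 0 ≤ α) (h1 : α ≤ 1) (n : ℕ) :
    ⌈α * ((n : ℝ) + 1)⌉ - ⌈α * n⌉ ∈ Set.Icc 0 1 := by
  have hmono : ⌈α * n⌉ ≤ ⌈α * ((n : ℝ) + 1)⌉ := Int.ceil_mono (by nlinarith)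
  have hjump : ⌈α * ((n : ℝ) + 1)⌉ ≤ ⌈α * n + ((1 : ℤ) : ℝ)⌉ :=
    Int.ceil_mono (by push_cast; nlinarith)
  rw [Int.ceil_add_intCast] at hjump
  constructor <;> omega

theorem upperMechanical_mem_Icc (hab : a ≤ b) (h0 : 0 ≤ α) (h1 : α ≤ 1) (n : ℕ) :
    upperMechanical a b α n ∈ Set.Icc a b := by
  obtain ⟨hs0, hs1⟩ := ceil_mul_add_one_sub_ceil_mul_mem_Icc h0 h1 n
  constructor <;> unfold upperMechanical <;> nlinarith

theorem upperMechanical_zero (h0 : 0 < α) (h1 : α ≤ 1) : upperMechanical a b α 0 = b := by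
  have hceil : ⌈α⌉ = 1 := Int.ceil_eq_iff.mpr ⟨by norm_num [h0], by norm_num [h1]⟩
  simp [upperMechanical, hceil]

theorem upperMechanical_natFloor_inv (h0 : 0 < α) (h1 : α ≤ 1) :
    upperMechanical a b α ⌊α⁻¹⌋₊ = b := by
  set n := ⌊α⁻¹⌋₊
  have hlow : ⌈α * n⌉ ≤ 1 := by
    have := Nat.floor_le (inv_nonneg.mpr h0.le)
    refine Int.ceil_le.mpr ?_
    calc α * n ≤ α * α⁻¹ := by gcongr
      _ = ((1 : ℤ) : ℝ) := by simp [h0.ne']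
  have hhigh : 1 < ⌈α * ((n : ℝ) + 1)⌉ := by
    have := Nat.lt_floor_add_one α⁻¹
    refine Int.lt_ceil.mpr ?_
    calc ((1 : ℤ) : ℝ) = α * α⁻¹ := by simp [h0.ne']
      _ < α * ((n : ℝ) + 1) := by gcongr
  have hstep := (ceil_mul_add_one_sub_ceil_mul_mem_Icc h0.le h1 n).2
  have : ⌈α * ((n : ℝ) + 1)⌉ - ⌈α * n⌉ = 1 := by omega
  simp [upperMechanical, this]

theorem sum_range_upperMechanical_add (m j : ℕ) :
    ∑ k ∈ range j, upperMechanical a b α (m + k) =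
      j * a + (b - a) * (⌈α * ((m + j : ℕ) : ℝ)⌉ - ⌈α * m⌉) := by
  have hstep (k : ℕ) : upperMechanical a b α (m + k) =
      a + (b - a) * (⌈α * ((m + (k + 1) : ℕ) : ℝ)⌉ - ⌈α * ((m + k : ℕ) : ℝ)⌉) := by
    simp [upperMechanical, add_assoc]
  simp_rw [hstep, sum_add_distrib, ← mul_sum, sum_range_sub (fun k ↦ ⌈α * ((m + k : ℕ) : ℝ)⌉)]
  simp

theorem sum_range_upperMechanical (j : ℕ) :
    ∑ k ∈ range j, upperMechanical a b α k = j * a + (b - a) * ⌈α * j⌉ := by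
  simpa using sum_range_upperMechanical_add (a := a) (b := b) (α := α) 0 j

theorem sum_range_upperMechanical_add_le (hab : a ≤ b) (m j : ℕ) :
    ∑ k ∈ range j, upperMechanical a b α (m + k) ≤ ∑ k ∈ range j, upperMechanical a b α k := by
  have hsub : ⌈α * ((m + j : ℕ) : ℝ)⌉ ≤ ⌈α * m⌉ + ⌈α * j⌉ := by
    simpa [mul_add] using Int.ceil_add_le (α * m) (α * j)
  rw [sum_range_upperMechanical_add, sum_range_upperMechanical]
  nlinarith

theorem exists_ceil_mul_add_lt (hα : Irrational α) {m : ℕ} (hm : m ≠ 0) :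
    ∃ j : ℕ, ⌈α * ((m + j : ℕ) : ℝ)⌉ < ⌈α * m⌉ + ⌈α * j⌉ := by
  by_contra! hadd
  have hmul (k : ℕ) : k * ⌈α * m⌉ ≤ ⌈α * ((k * m : ℕ) : ℝ)⌉ := by
    induction k with
    | zero => simp
    | succ k ih =>
      have := hadd (k * m)
      rw [show m + k * m = (k + 1) * m by ring] at this
      have e : ((k + 1 : ℕ) : ℤ) * ⌈α * m⌉ = ⌈α * m⌉ + k * ⌈α * m⌉ := by push_cast; ring
      rw [e]
      linarith
  have hgap : 0 < ⌈α * m⌉ - α * m :=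
    sub_pos.mpr ((Int.le_ceil _).lt_of_ne ((hα.mul_natCast hm).ne_int _))
  obtain ⟨k, hk⟩ := exists_nat_gt (1 / (⌈α * m⌉ - α * m))
  have hk' : (k : ℝ) * ⌈α * m⌉ < α * (k * m) + 1 := by
    have hceil := Int.ceil_lt_add_one (α * ((k * m : ℕ) : ℝ))
    have hmulk := Int.cast_le (R := ℝ) |>.mpr (hmul k)
    push_cast at hceil hmulk
    linarith
  rw [div_lt_iff₀ hgap] at hk
  nlinarith

theorem exists_sum_range_upperMechanical_add_lt (hab : a < b) (hα : Irrational α) {m : ℕ}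
    (hm : m ≠ 0) :
    ∃ j, ∑ k ∈ range j, upperMechanical a b α (m + k) <
      ∑ k ∈ range j, upperMechanical a b α k := by
  obtain ⟨j, hj⟩ := exists_ceil_mul_add_lt hα hm
  refine ⟨j, ?_⟩
  rw [sum_range_upperMechanical_add, sum_range_upperMechanical]
  nlinarith

theorem tailSeries_upperMechanical_lt (ha : 0 ≤ a) (hab : a < b) (hα : Irrational α) (h0 : 0 ≤ α)
    (h1 : α ≤ 1) {m : ℕ} (hm : m ≠ 0) {x : ℝ} (hx0 : 0 < x) (hx1 : x < 1) :
    tailSeries (upperMechanical a b α) m x < tailSeries (upperMechanical a b α) 0 x := by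
  have hu (n : ℕ) : upperMechanical a b α n ∈ Set.Icc 0 b :=
    Set.Icc_subset_Icc ha le_rfl (upperMechanical_mem_Icc hab.le h0 h1 n)
  have hs := summable_tailSeries hu hx0.le hx1
  rw [← sub_neg, tailSeries, tailSeries, ← (hs m).tsum_sub (hs 0)]
  simp only [zero_add, ← sub_mul]
  have hpartial (j : ℕ) :
      ∑ k ∈ range j, ((upperMechanical a b α (m + k) : ℝ) - upperMechanical a b α k) =
        ((∑ k ∈ range j, upperMechanical a b α (m + k) -
          ∑ k ∈ range j, upperMechanical a b α k : ℤ) : ℝ) := by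
    push_cast [sum_sub_distrib]
    rfl
  refine tsum_mul_neg_of_partialSums_nonpos
    ((pow_right_strictAnti₀ hx0 hx1).comp_strictMono (strictMono_id.add_const 1))
    (fun k ↦ by positivity) (by simpa only [sub_mul, zero_add] using (hs m).sub (hs 0))
    (fun j ↦ ?_) ?_
  · rw [hpartial]
    exact_mod_cast sub_nonpos.mpr (sum_range_upperMechanical_add_le hab.le m j)
  · obtain ⟨j, hj⟩ := exists_sum_range_upperMechanical_add_lt hab hα hm
    exact ⟨j, by rw [hpartial]; exact_mod_cast sub_neg.mpr hj⟩

theorem exists_floor_mul_betaOrbit_eq_upperMechanical (ha : 0 ≤ a) (hab : a < b)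
    (hα : Irrational α) (h0 : 0 < α) (h1 : α < 1) :
    ∃ β : ℝ, b < β ∧ β < b + 1 ∧ ∀ n, ⌊β * betaOrbit β n⌋ = upperMechanical a b α n := by
  set u := upperMechanical a b α
  have hu (n : ℕ) : u n ∈ Set.Icc 0 b :=
    Set.Icc_subset_Icc ha le_rfl (upperMechanical_mem_Icc hab.le h0.le h1.le n)
  have hu0 : u 0 = b := upperMechanical_zero h0 h1.le
  obtain ⟨n, hn⟩ : ∃ n, ⌊α⁻¹⌋₊ = 1 + n :=
    Nat.exists_eq_add_of_le (Nat.le_floor (by simpa using one_le_inv₀ h0 |>.mpr h1.le))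
  have hun : u (1 + n) = b := hn ▸ upperMechanical_natFloor_inv h0 h1.le
  obtain ⟨x, ⟨hx0, hx1⟩, hx⟩ := exists_tailSeries_eq_one hu (by omega) (by omega : 1 ≤ u (1 + n))
  have hT (m : ℕ) : tailSeries u (m + 1) x ∈ Set.Ico 0 1 :=
    ⟨tailSeries_nonneg hu hx0.le _,
      hx ▸ tailSeries_upperMechanical_lt ha hab hα h0.le h1.le m.succ_ne_zero hx0 hx1⟩
  have hrec (m : ℕ) : x⁻¹ * tailSeries u m x = u m + tailSeries u (m + 1) x := by
    rw [tailSeries_eq_add hu hx0.le hx1]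
    field_simp
  have hb : (0 : ℝ) < b := by exact_mod_cast ha.trans_lt hab
  have hT1 : 0 < tailSeries u 1 x :=
    (mul_pos (by rwa [hun]) (pow_pos hx0 _)).trans_le (mul_pow_le_tailSeries hu hx0.le hx1 1 n)
  have hβ : x⁻¹ = b + tailSeries u 1 x := by simpa [hx, hu0] using hrec 0
  exact ⟨x⁻¹, by linarith, by linarith [(hT 0).2], floor_mul_betaOrbit_eq_of_remainders hx hT hrec⟩

end UpperMechanical

/-- For integers `0 ≤ a < b` and irrational `α ∈ (0,1)`, there is a unique `β ∈ (b, b+1)`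
whose greedy β-expansion of 1 has digit sequence the upper mechanical word `s'_{α,0}` over
`{a,b}`; moreover this `β` satisfies `∑ u n·β^{−(n+1)} = 1`. -/
theorem exists_unique_self_sturmian (a b : ℤ) (ha : 0 ≤ a) (hab : a < b)
    (α : ℝ) (hα : Irrational α) (h0 : 0 < α) (h1 : α < 1) :
    (∃! β : ℝ, (b : ℝ) < β ∧ β < (b : ℝ) + 1 ∧
      ∀ n : ℕ, ⌊β * betaOrbit β n⌋ = upperMechanical a b α n) ∧
    (∀ β : ℝ, (b : ℝ) < β → β < (b : ℝ) + 1 →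
      (∀ n : ℕ, ⌊β * betaOrbit β n⌋ = upperMechanical a b α n) →
      ∑' n : ℕ, (upperMechanical a b α n : ℝ) / β ^ (n + 1) = 1) := by
  have hb : (1 : ℝ) ≤ b := by exact_mod_cast (by omega : 1 ≤ b)
  have hinv {γ : ℝ} (hγ : (b : ℝ) < γ) : γ⁻¹ ∈ Set.Ico 0 1 :=
    ⟨inv_nonneg.mpr (by linarith), inv_lt_one_of_one_lt₀ (hb.trans_lt hγ)⟩
  have hmono : StrictMonoOn (tailSeries (upperMechanical a b α) 0) (Set.Ico 0 1) :=
    strictMonoOn_tailSeries (B := b)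
      (fun n ↦ Set.Icc_subset_Icc ha le_rfl (upperMechanical_mem_Icc hab.le h0.le h1.le n))
      (by rw [upperMechanical_zero h0 h1.le]; omega)
  obtain ⟨β, hβb, hβb1, hβ⟩ := exists_floor_mul_betaOrbit_eq_upperMechanical ha hab hα h0 h1
  refine ⟨⟨β, ⟨hβb, hβb1, hβ⟩, fun γ ⟨hγb, _, hγ⟩ ↦
    inv_injective (hmono.injOn (hinv hγb) (hinv hβb) ?_)⟩, fun γ hγb _ hγ ↦ ?_⟩
  · rw [tailSeries_inv_eq_one_of_floor_eq (hb.trans_lt hγb) hγ,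
      tailSeries_inv_eq_one_of_floor_eq (hb.trans_lt hβb) hβ]
  · simpa [hγ] using (hasSum_floor_mul_betaOrbit_div_pow (hb.trans_lt hγb)).tsum_eq
end

section
/- Let a, b be integers with 0 ≤ a < b, and let p, q be coprime integers with 0 < p < q. Define the finite digit word c(0), …, c(q−1) by c(0) = b, c(i) = a + (b − a)·(⌈(i+1)p/q⌉ − ⌈i·p/q⌉) for 1 ≤ i ≤ q−2, and c(q−1) = b (the word b·z_{p,q}·b over the alphabet {a,b}). Then there exists a unique β ∈ (b, b+1) whose greedy β-expansion of 1 is exactly this finite word: with r(0) = 1 and r(k+1) = β·r(k) − ⌊β·r(k)⌋ one has ⌊β·r(i)⌋ = c(i) for 0 ≤ i ≤ q−1 and r(q) = 0. -/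
/-- The finite word `b·z_{p,q}·b` over the alphabet `{a,b}`:
`c 0 = b`, `c i = a + (b−a)·(⌈(i+1)p/q⌉ − ⌈ip/q⌉)` for `1 ≤ i ≤ q−2`, `c (q−1) = b`. -/
def bCentralb (a b : ℤ) (p q : ℕ) (i : ℕ) : ℤ :=
  if i = 0 then b
  else if i + 1 = q then b
  else a + (b - a) * (⌈(((i : ℚ) + 1) * p) / q⌉ - ⌈((i : ℚ) * p) / q⌉)

open Finset

/-- Parry's condition on the finite word `c 0 ⋯ c (q-1)`. -/
def SuffixesLexLE (c : ℕ → ℤ) (q : ℕ) : Prop :=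
  ∀ k, 0 < k → k < q →
    (∃ j, k + j < q ∧ (∀ i < j, c (k + i) = c i) ∧ c (k + j) < c j) ∨
      ∀ i, k + i < q → c (k + i) = c i

noncomputable def suffixValue (c : ℕ → ℤ) (q : ℕ) (β : ℝ) (k : ℕ) : ℝ :=
  ∑ i ∈ range (q - k), (c (k + i) : ℝ) / β ^ (i + 1)

section SuffixValue

variable {c : ℕ → ℤ} {q k : ℕ} {β : ℝ}

@[simp]
lemma suffixValue_of_le (hqk : q ≤ k) : suffixValue c q β k = 0 := by
  simp [suffixValue, Nat.sub_eq_zero_of_le hqk]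

lemma suffixValue_eq_add {m : ℕ} (hkm : k + m ≤ q) :
    suffixValue c q β k =
      ∑ i ∈ range m, (c (k + i) : ℝ) / β ^ (i + 1) + suffixValue c q β (k + m) / β ^ m := by
  rw [suffixValue, show q - k = m + (q - (k + m)) by omega, sum_range_add, suffixValue, sum_div]
  congr 1
  refine sum_congr rfl fun i _ => ?_
  rw [← add_assoc, show m + i + 1 = i + 1 + m by ring, pow_add, div_div]

lemma mul_suffixValue (hβ : β ≠ 0) (hk : k < q) :
    β * suffixValue c q β k = c k + suffixValue c q β (k + 1) := by
  rw [suffixValue_eq_add (m := 1) hk]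
  simp [mul_add, mul_div_cancel₀, hβ]

lemma suffixValue_nonneg (hc : ∀ i < q, 0 ≤ c i) (hβ : 0 < β) (k : ℕ) :
    0 ≤ suffixValue c q β k :=
  sum_nonneg fun i hi => by
    have := hc (k + i) (by have := mem_range.1 hi; omega)
    positivity

lemma suffixValue_pos (hc : ∀ i < q, 0 ≤ c i) (hlast : 0 < c (q - 1)) (hβ : 0 < β) {k : ℕ}
    (hk : k < q) : 0 < suffixValue c q β k := by
  have h := mul_suffixValue (c := c) hβ.ne' hk
  have hck : (0 : ℝ) ≤ c k := by exact_mod_cast hc k hk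
  rcases (Nat.succ_le_of_lt hk).eq_or_lt with hkq | hkq
  · have hc' : (0 : ℝ) < c k := by rw [show k = q - 1 by omega]; exact_mod_cast hlast
    rw [suffixValue_of_le hkq.ge] at h
    exact pos_of_mul_pos_right (by linarith) hβ.le
  · have := suffixValue_pos hc hlast hβ hkq
    exact pos_of_mul_pos_right (by linarith) hβ.le
termination_by q - k

lemma suffixValue_lt_iff_of_agree (hβ : 0 < β) {l m : ℕ} (hagree : ∀ i < m, c (k + i) = c (l + i))
    (hk : k + m ≤ q) (hl : l + m ≤ q) :
    suffixValue c q β k < suffixValue c q β l ↔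
      suffixValue c q β (k + m) < suffixValue c q β (l + m) := by
  rw [suffixValue_eq_add hk, suffixValue_eq_add hl,
    sum_congr rfl fun i hi => by rw [hagree i (mem_range.1 hi)], add_lt_add_iff_left,
    div_lt_div_iff_of_pos_right (by positivity)]

lemma suffixValue_lt_one (hc : ∀ i < q, 0 ≤ c i) (hlast : 0 < c (q - 1)) (hβ : 0 < β)
    (hlex : SuffixesLexLE c q) (h1 : suffixValue c q β 0 = 1) {k : ℕ} (hk0 : 0 < k) :
    suffixValue c q β k < 1 := by
  rcases le_or_gt q k with hqk | hkq
  · simp [suffixValue_of_le hqk]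
  rw [← h1]
  rcases hlex k hk0 hkq with ⟨j, hj, hagree, hdrop⟩ | hprefix
  · rw [suffixValue_lt_iff_of_agree hβ (l := 0) (by simpa using hagree) hj.le (by omega), zero_add]
    have hnext := suffixValue_lt_one hc hlast hβ hlex h1 (k := k + j + 1) (by omega)
    have hdrop' : (c (k + j) : ℝ) + 1 ≤ c j := by exact_mod_cast hdrop
    have := suffixValue_nonneg hc hβ (j + 1)
    refine lt_of_mul_lt_mul_left ?_ hβ.le
    rw [mul_suffixValue hβ.ne' hj, mul_suffixValue hβ.ne' (by omega)]
    linarith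
  · rw [suffixValue_lt_iff_of_agree hβ (l := 0) (m := q - k)
      (fun i hi => by simpa using hprefix i (by omega)) (by omega) (by omega),
      Nat.add_sub_cancel' hkq.le, suffixValue_of_le le_rfl, zero_add]
    exact suffixValue_pos hc hlast hβ (by omega)
termination_by q - k

lemma suffixValue_lt_one_of_digit_lt (hβ : 0 < β) (hc : ∀ i < q, (c i : ℝ) + 1 ≤ β) (k : ℕ) :
    suffixValue c q β k < 1 := by
  rcases lt_or_ge k q with hkq | hqk
  · have := mul_suffixValue (c := c) hβ.ne' hkq
    have := suffixValue_lt_one_of_digit_lt hβ hc (k + 1)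
    have := hc k hkq
    refine lt_of_mul_lt_mul_left ?_ hβ.le
    linarith
  · simp [suffixValue_of_le hqk]
termination_by q - k

lemma suffixValue_zero_strictAntiOn (hq : 0 < q) (hc : ∀ i < q, 0 ≤ c i) (hc0 : 0 < c 0) :
    StrictAntiOn (fun β => suffixValue c q β 0) (Set.Ioi 0) := by
  intro x (hx : 0 < x) y (hy : 0 < y) hxy
  refine sum_lt_sum (fun i hi => ?_) ⟨0, mem_range.2 (by omega), ?_⟩
  · have := hc (0 + i) (by simpa using hi)
    gcongr
  · have : (0 : ℝ) < c 0 := by exact_mod_cast hc0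
    simpa using div_lt_div_of_pos_left this hx hxy

lemma continuousOn_suffixValue : ContinuousOn (fun β => suffixValue c q β k) (Set.Ioi 0) := by
  unfold suffixValue
  fun_prop (disch := intro x hx; exact pow_ne_zero _ (ne_of_gt hx))

lemma floor_mul_suffixValue (hβ : β ≠ 0) (hk : k < q) (h0 : 0 ≤ suffixValue c q β (k + 1))
    (h1 : suffixValue c q β (k + 1) < 1) : ⌊β * suffixValue c q β k⌋ = c k := by
  rw [mul_suffixValue hβ hk, Int.floor_intCast_add, Int.floor_eq_zero_iff.2 ⟨h0, h1⟩, add_zero]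

lemma betaOrbit_eq_suffixValue (hβ : β ≠ 0) (h1 : suffixValue c q β 0 = 1)
    (hT : ∀ k, 0 < k → k ≤ q → 0 ≤ suffixValue c q β k ∧ suffixValue c q β k < 1) :
    ∀ k ≤ q, betaOrbit β k = suffixValue c q β k
  | 0, _ => h1.symm
  | k + 1, hk => by
    have hT' := hT (k + 1) k.succ_pos hk
    rw [betaOrbit, betaOrbit_eq_suffixValue hβ h1 hT k (by omega),
      floor_mul_suffixValue hβ hk hT'.1 hT'.2, mul_suffixValue hβ hk, add_sub_cancel_left]

lemma betaOrbit_eq_suffixValue_of_digits (hβ : β ≠ 0)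
    (hdig : ∀ i < q, ⌊β * betaOrbit β i⌋ = c i) (hend : betaOrbit β q = 0) {k : ℕ} (hk : k ≤ q) :
    betaOrbit β k = suffixValue c q β k := by
  rcases hk.lt_or_eq with hk | rfl
  · have hnext : betaOrbit β (k + 1) = β * betaOrbit β k - c k := by rw [betaOrbit, hdig k hk]
    have := betaOrbit_eq_suffixValue_of_digits hβ hdig hend (k := k + 1) hk
    refine mul_left_cancel₀ hβ ?_
    rw [mul_suffixValue hβ hk]
    linarith
  · rw [hend, suffixValue_of_le le_rfl]
termination_by q - k

theorem betaOrbit_digits_iff (hc : ∀ i < q, 0 ≤ c i) (hlast : 0 < c (q - 1))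
    (hlex : SuffixesLexLE c q) (hβ : 0 < β) :
    ((∀ i < q, ⌊β * betaOrbit β i⌋ = c i) ∧ betaOrbit β q = 0) ↔ suffixValue c q β 0 = 1 := by
  constructor
  · rintro ⟨hdig, hend⟩
    rw [← betaOrbit_eq_suffixValue_of_digits hβ.ne' hdig hend (Nat.zero_le q), betaOrbit]
  · intro h1
    have hT : ∀ k, 0 < k → k ≤ q → 0 ≤ suffixValue c q β k ∧ suffixValue c q β k < 1 :=
      fun k hk0 _ => ⟨suffixValue_nonneg hc hβ k, suffixValue_lt_one hc hlast hβ hlex h1 hk0⟩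
    have horbit := betaOrbit_eq_suffixValue hβ.ne' h1 hT
    refine ⟨fun i hi => ?_, by rw [horbit q le_rfl, suffixValue_of_le le_rfl]⟩
    rw [horbit i hi.le]
    exact floor_mul_suffixValue hβ.ne' hi (hT (i + 1) i.succ_pos hi).1 (hT (i + 1) i.succ_pos hi).2

end SuffixValue

theorem existsUnique_betaOrbit_digits {c : ℕ → ℤ} {q : ℕ} (hq : 1 < q)
    (hc : ∀ i < q, 0 ≤ c i ∧ c i ≤ c 0) (hlast : 0 < c (q - 1)) (hlex : SuffixesLexLE c q) :
    ∃! β : ℝ, (c 0 : ℝ) < β ∧ β < c 0 + 1 ∧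
      (∀ i < q, ⌊β * betaOrbit β i⌋ = c i) ∧ betaOrbit β q = 0 := by
  have hc0 : (0 : ℝ) < c 0 := by exact_mod_cast hlast.trans_le (hc (q - 1) (by omega)).2
  have hnonneg : ∀ i < q, 0 ≤ c i := fun i hi => (hc i hi).1
  have hlo : 1 < suffixValue c q (c 0) 0 := by
    have := mul_suffixValue (c := c) hc0.ne' (by omega : 0 < q)
    have := suffixValue_pos hnonneg hlast hc0 hq
    refine lt_of_mul_lt_mul_left ?_ hc0.le
    linarith
  have hhi : suffixValue c q (c 0 + 1) 0 < 1 :=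
    suffixValue_lt_one_of_digit_lt (by positivity)
      (fun i hi => by exact_mod_cast add_le_add_left (hc i hi).2 1) 0
  obtain ⟨β, ⟨hβ₀, hβ₁⟩, hβ⟩ := intermediate_value_Ioo' (by linarith)
    (continuousOn_suffixValue.mono fun x hx => hc0.trans_le hx.1) ⟨hhi, hlo⟩
  have hβpos : 0 < β := hc0.trans hβ₀
  refine ⟨β, ⟨hβ₀, hβ₁, (betaOrbit_digits_iff hnonneg hlast hlex hβpos).2 hβ⟩, ?_⟩
  rintro γ ⟨hγ₀, -, hγ⟩
  refine (suffixValue_zero_strictAntiOn (by omega) hnonneg (by exact_mod_cast hc0)).injOn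
    (hc0.trans hγ₀) hβpos ?_
  exact ((betaOrbit_digits_iff hnonneg hlast hlex (hc0.trans hγ₀)).1 hγ).trans hβ.symm

/-- The number of letters `1` in the length-`n` prefix of the upper Christoffel word of slope
`p / q`. -/
def christoffelCeil (p q n : ℕ) : ℤ := ⌈((n : ℚ) * p) / q⌉

def upperChristoffelWord (p q i : ℕ) : ℤ := ⌈(((i : ℚ) + 1) * p) / q⌉ - ⌈((i : ℚ) * p) / q⌉

section Christoffel

variable {p q : ℕ}

lemma upperChristoffelWord_eq (i : ℕ) :
    upperChristoffelWord p q i = christoffelCeil p q (i + 1) - christoffelCeil p q i := by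
  simp [upperChristoffelWord, christoffelCeil]

@[simp]
lemma christoffelCeil_zero : christoffelCeil p q 0 = 0 := by simp [christoffelCeil]

lemma christoffelCeil_self (hq : q ≠ 0) : christoffelCeil p q q = p := by
  simp [christoffelCeil, hq]

lemma christoffelCeil_one (hp : 0 < p) (hpq : p ≤ q) : christoffelCeil p q 1 = 1 := by
  have hq : (0 : ℚ) < q := by exact_mod_cast hp.trans_le hpq
  rw [christoffelCeil, Int.ceil_eq_iff]
  constructor
  · norm_num; positivity
  · rw [Nat.cast_one, one_mul, Int.cast_one, div_le_one hq]; exact_mod_cast hpq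

lemma christoffelCeil_add_le (m n : ℕ) :
    christoffelCeil p q (m + n) ≤ christoffelCeil p q m + christoffelCeil p q n := by
  rw [christoffelCeil, Nat.cast_add, add_mul, add_div]
  exact Int.ceil_add_le _ _

lemma christoffelCeil_add_le_add_one (m n : ℕ) :
    christoffelCeil p q m + christoffelCeil p q n ≤ christoffelCeil p q (m + n) + 1 := by
  rw [christoffelCeil, christoffelCeil, christoffelCeil, Nat.cast_add, add_mul, add_div]
  exact Int.ceil_add_ceil_le _ _

lemma christoffelCeil_add_christoffelCeil_sub (hcop : p.Coprime q) {k : ℕ} (hk0 : 0 < k)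
    (hkq : k < q) : christoffelCeil p q k + christoffelCeil p q (q - k) = p + 1 := by
  have hq : (q : ℚ) ≠ 0 := by exact_mod_cast (hk0.trans hkq).ne'
  have hsub : ((q - k : ℕ) : ℚ) * p / q = -((k : ℚ) * p / q) + (p : ℤ) := by
    rw [Nat.cast_sub hkq.le]; field_simp; push_cast; ring
  have hnotint : (k : ℚ) * p / q ∉ Set.range Int.cast := by
    rintro ⟨n, hn⟩
    have hdvd : q ∣ k * p := by
      refine Int.natCast_dvd_natCast.1 ⟨n, ?_⟩
      rw [eq_div_iff hq] at hn
      exact_mod_cast hn.symm.trans (mul_comm _ _)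
    exact absurd (Nat.le_of_dvd hk0 (hcop.symm.dvd_of_dvd_mul_right hdvd)) (by omega)
  rw [christoffelCeil, christoffelCeil, hsub, Int.ceil_add_intCast, Int.ceil_neg,
    (Int.ceil_eq_floor_add_one_iff_notMem _).2 hnotint]
  ring

lemma upperChristoffelWord_zero (hp : 0 < p) (hpq : p ≤ q) : upperChristoffelWord p q 0 = 1 := by
  rw [upperChristoffelWord_eq, christoffelCeil_one hp hpq, christoffelCeil_zero, sub_zero]

lemma upperChristoffelWord_eq_zero_or_one (hp : 0 < p) (hpq : p ≤ q) (i : ℕ) :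
    upperChristoffelWord p q i = 0 ∨ upperChristoffelWord p q i = 1 := by
  have h₁ := christoffelCeil_add_le (p := p) (q := q) i 1
  have h₂ := christoffelCeil_add_le_add_one (p := p) (q := q) i 1
  rw [christoffelCeil_one hp hpq] at h₁ h₂
  rw [upperChristoffelWord_eq]
  omega

lemma exists_upperChristoffelWord_shift_drop (hp : 0 < p) (hpq : p < q) (hcop : p.Coprime q)
    {k : ℕ} (hk0 : 0 < k) (hkq : k < q) :
    ∃ j, k + j < q ∧ (∀ i < j, upperChristoffelWord p q (k + i) = upperChristoffelWord p q i) ∧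
      upperChristoffelWord p q (k + j) = 0 ∧ upperChristoffelWord p q j = 1 := by
  have hjumpAt : christoffelCeil p q (k + (q - k - 1) + 1) + 1 =
      christoffelCeil p q k + christoffelCeil p q (q - k - 1 + 1) := by
    rw [show k + (q - k - 1) + 1 = q by omega, show q - k - 1 + 1 = q - k by omega,
      christoffelCeil_self (by omega), christoffelCeil_add_christoffelCeil_sub hcop hk0 hkq]
  classical
  have hjump : ∃ n, christoffelCeil p q (k + n + 1) + 1 =
      christoffelCeil p q k + christoffelCeil p q (n + 1) := ⟨_, hjumpAt⟩
  set j := Nat.find hjump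
  have hjq : k + j < q := by have := Nat.find_min' hjump hjumpAt; omega
  have hadd : ∀ i ≤ j,
      christoffelCeil p q (k + i) = christoffelCeil p q k + christoffelCeil p q i := by
    rintro (_ | i) hi
    · simp
    · have := Nat.find_min hjump (m := i) (by omega)
      have := christoffelCeil_add_le (p := p) (q := q) k (i + 1)
      have := christoffelCeil_add_le_add_one (p := p) (q := q) k (i + 1)
      rw [← add_assoc] at *
      omega
  have hj : christoffelCeil p q (k + j + 1) + 1 =
      christoffelCeil p q k + christoffelCeil p q (j + 1) := Nat.find_spec hjump
  have hdrop : upperChristoffelWord p q (k + j) + 1 = upperChristoffelWord p q j := by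
    rw [upperChristoffelWord_eq, upperChristoffelWord_eq, hadd j le_rfl]
    omega
  refine ⟨j, hjq, fun i hi => ?_, ?_⟩
  · rw [upperChristoffelWord_eq, upperChristoffelWord_eq, add_assoc, hadd i hi.le, hadd (i + 1) hi]
    ring
  · rcases upperChristoffelWord_eq_zero_or_one hp hpq.le j with h | h <;>
    rcases upperChristoffelWord_eq_zero_or_one hp hpq.le (k + j) with h' | h' <;> omega

end Christoffel

section bCentralb

variable {a b : ℤ} {p q : ℕ}

@[simp]
lemma bCentralb_zero : bCentralb a b p q 0 = b := by simp [bCentralb]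

lemma bCentralb_sub_one : bCentralb a b p q (q - 1) = b := by
  unfold bCentralb
  split_ifs <;> first | rfl | omega

lemma bCentralb_of_succ_ne (hp : 0 < p) (hpq : p ≤ q) {i : ℕ} (hi : i + 1 ≠ q) :
    bCentralb a b p q i = a + (b - a) * upperChristoffelWord p q i := by
  rcases Nat.eq_zero_or_pos i with rfl | hi0
  · rw [upperChristoffelWord_zero hp hpq, bCentralb_zero]; ring
  · simp only [bCentralb, if_neg hi0.ne', if_neg hi, upperChristoffelWord]

lemma bCentralb_eq_or_eq (hp : 0 < p) (hpq : p ≤ q) (i : ℕ) :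
    bCentralb a b p q i = a ∨ bCentralb a b p q i = b := by
  by_cases hi : i + 1 = q
  · right; rw [show i = q - 1 by omega, bCentralb_sub_one]
  · rw [bCentralb_of_succ_ne hp hpq hi]
    rcases upperChristoffelWord_eq_zero_or_one hp hpq i with h | h <;> simp [h]

lemma suffixesLexLE_bCentralb (hab : a < b) (hp : 0 < p) (hpq : p < q) (hcop : p.Coprime q) :
    SuffixesLexLE (bCentralb a b p q) q := by
  intro k hk0 hkq
  obtain ⟨j, hjq, hagree, hkj, hj⟩ := exists_upperChristoffelWord_shift_drop hp hpq hcop hk0 hkq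
  have hagree' : ∀ i < j, bCentralb a b p q (k + i) = bCentralb a b p q i := fun i hi => by
    rw [bCentralb_of_succ_ne hp hpq.le (by omega), bCentralb_of_succ_ne hp hpq.le (by omega),
      hagree i hi]
  have hj' : bCentralb a b p q j = b := by rw [bCentralb_of_succ_ne hp hpq.le (by omega), hj]; ring
  by_cases hlast : k + j + 1 = q
  · right
    intro i hi
    rcases (show i < j ∨ i = j by omega) with hi | rfl
    · exact hagree' i hi
    · rw [hj', show k + i = q - 1 by omega, bCentralb_sub_one]
  · left
    refine ⟨j, hjq, hagree', ?_⟩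
    rw [hj', bCentralb_of_succ_ne hp hpq.le hlast, hkj]
    simpa using hab

end bCentralb

/-- For integers `0 ≤ a < b` and coprime `0 < p < q`, there is a unique `β ∈ (b, b+1)`
whose greedy β-expansion of 1 is exactly the finite word `b z_{p,q} b`. -/
theorem exists_unique_lower_self_christoffel (a b : ℤ) (ha : 0 ≤ a) (hab : a < b)
    (p q : ℕ) (hp : 0 < p) (hpq : p < q) (hcop : Nat.Coprime p q) :
    ∃! β : ℝ, (b : ℝ) < β ∧ β < (b : ℝ) + 1 ∧
      (∀ i : ℕ, i < q → ⌊β * betaOrbit β i⌋ = bCentralb a b p q i) ∧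
      betaOrbit β q = 0 := by
  have hdigits : ∀ i < q, 0 ≤ bCentralb a b p q i ∧ bCentralb a b p q i ≤ bCentralb a b p q 0 :=
    fun i _ => by rcases bCentralb_eq_or_eq (a := a) (b := b) hp hpq.le i with h | h <;>
      rw [h, bCentralb_zero] <;> omega
  simpa only [bCentralb_zero] using existsUnique_betaOrbit_digits (by omega) hdigits
    (by rw [bCentralb_sub_one]; omega) (suffixesLexLE_bCentralb hab hp hpq hcop)
end

section
/- Let M > 0 and let (a_n)_{n≥1} be a real sequence with a_1 ≥ 1, 0 ≤ a_n ≤ M for all n, and (a_n) not equal to the sequence (1, 0, 0, …). Let ζ ∈ (0,1) satisfy 1 = ∑_{n=1}^∞ a_n ζ^n. For each m ≥ 1 let (b_{m,n})_{n≥1} be a real sequence with 0 ≤ b_{m,n} ≤ M for all n and b_{m,i} = a_i for 1 ≤ i ≤ m, and let ζ_m ∈ (0,1) satisfy 1 = ∑_{n=1}^∞ b_{m,n} ζ_m^n. Then lim_{m→∞} ζ_m = ζ; moreover |ζ_m − ζ| ≤ M·(ζ^{m+1}/(1−ζ) + ζ_m^{m+1}/(1−ζ_m)) for every m. -/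
/-!
Split each series into its first `m` terms and its tail. Since the coefficients agree up to
index `m`, both roots satisfy `P ζ + Tₐ = 1 = P ζₘ + T_b` for the same polynomial
`P x = ∑_{i ≤ m} aᵢ xⁱ`, whose nonnegative coefficients and `a₁ ≥ 1` give
`|x - y| ≤ |P x - P y|` on `[0, ∞)`. Hence `|ζₘ - ζ| ≤ |Tₐ - T_b|`, which is at most the sum of
the geometric tail bounds. For convergence, the `ζₘ` stay below a fixed `c < 1`: as `a` is not
`(1, 0, 0, …)`, some truncation `P_k` exceeds `1` at `x = 1`, hence at some `c < 1`, while
`P_k ζₘ ≤ 1` for `m ≥ k`.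
-/

open Filter Topology Finset

noncomputable def partialPowerSum (a : ℕ → ℝ) (m : ℕ) (x : ℝ) : ℝ :=
  ∑ i ∈ range m, a (i + 1) * x ^ (i + 1)

noncomputable def powerSumTail (a : ℕ → ℝ) (m : ℕ) (x : ℝ) : ℝ :=
  ∑' n : ℕ, a (n + m + 1) * x ^ (n + m + 1)

section PartialPowerSum

variable {a b : ℕ → ℝ} {m : ℕ} {x y : ℝ}

theorem continuous_partialPowerSum : Continuous (partialPowerSum a m) := by
  unfold partialPowerSum
  fun_prop

theorem partialPowerSum_congr (h : ∀ i, 1 ≤ i → i ≤ m → b i = a i) :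
    partialPowerSum b m x = partialPowerSum a m x :=
  sum_congr rfl fun i hi => by rw [h (i + 1) (by omega) (mem_range.1 hi)]

theorem sub_le_partialPowerSum_sub (hm : 1 ≤ m) (ha1 : 1 ≤ a 1) (ha : ∀ n, 1 ≤ n → 0 ≤ a n)
    (hy : 0 ≤ y) (hyx : y ≤ x) :
    x - y ≤ partialPowerSum a m x - partialPowerSum a m y := by
  have hterm : ∀ i ∈ range m, 0 ≤ a (i + 1) * (x ^ (i + 1) - y ^ (i + 1)) := fun i _ =>
    mul_nonneg (ha _ (by omega)) (sub_nonneg.2 (pow_le_pow_left₀ hy hyx _))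
  calc x - y ≤ a 1 * (x - y) := le_mul_of_one_le_left (sub_nonneg.2 hyx) ha1
    _ = a (0 + 1) * (x ^ (0 + 1) - y ^ (0 + 1)) := by simp
    _ ≤ ∑ i ∈ range m, a (i + 1) * (x ^ (i + 1) - y ^ (i + 1)) :=
        single_le_sum hterm (mem_range.2 hm)
    _ = partialPowerSum a m x - partialPowerSum a m y := by
        simp only [partialPowerSum, ← sum_sub_distrib, mul_sub]

theorem abs_sub_le_abs_partialPowerSum_sub (hm : 1 ≤ m) (ha1 : 1 ≤ a 1)
    (ha : ∀ n, 1 ≤ n → 0 ≤ a n) (hx : 0 ≤ x) (hy : 0 ≤ y) :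
    |x - y| ≤ |partialPowerSum a m x - partialPowerSum a m y| := by
  rcases le_total y x with h | h
  · rw [abs_of_nonneg (sub_nonneg.2 h)]
    exact (sub_le_partialPowerSum_sub hm ha1 ha hy h).trans (le_abs_self _)
  · rw [abs_sub_comm, abs_of_nonneg (sub_nonneg.2 h), abs_sub_comm]
    exact (sub_le_partialPowerSum_sub hm ha1 ha hx h).trans (le_abs_self _)

theorem exists_one_lt_partialPowerSum_one (ha1 : 1 ≤ a 1) (ha : ∀ n, 1 ≤ n → 0 ≤ a n)
    (hane : ¬ (a 1 = 1 ∧ ∀ n, 2 ≤ n → a n = 0)) :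
    ∃ k, 1 ≤ k ∧ 1 < partialPowerSum a k 1 := by
  simp only [partialPowerSum, one_pow, mul_one]
  rcases ha1.lt_or_eq with h1 | h1
  · exact ⟨1, le_rfl, by simpa using h1⟩
  obtain ⟨n, hn, hne⟩ := not_forall₂.1 (not_and.1 hane h1.symm)
  obtain ⟨k, rfl⟩ : ∃ k, n = k + 1 + 1 := ⟨n - 2, by omega⟩
  have hfirst : a 1 ≤ ∑ i ∈ range (k + 1), a (i + 1) :=
    single_le_sum (f := fun i => a (i + 1)) (fun i _ => ha _ (by omega))
      (mem_range.2 k.succ_pos)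
  have hlast : 0 < a (k + 1 + 1) := (ha _ (by omega)).lt_of_ne' hne
  exact ⟨k + 1 + 1, by omega, by rw [sum_range_succ]; linarith⟩

theorem exists_lt_one_one_lt_partialPowerSum (h : 1 < partialPowerSum a m 1) :
    ∃ c, 0 ≤ c ∧ c < 1 ∧ 1 < partialPowerSum a m c := by
  have hnear : ∀ᶠ x in 𝓝[<] (1 : ℝ), 1 < partialPowerSum a m x :=
    nhdsWithin_le_nhds ((continuous_partialPowerSum.tendsto 1).eventually (lt_mem_nhds h))
  obtain ⟨c, hc, hc01⟩ := (hnear.and (Ioo_mem_nhdsLT zero_lt_one)).exists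
  exact ⟨c, hc01.1.le, hc01.2, hc⟩

end PartialPowerSum

section BoundedCoefficients

variable {M x : ℝ} {c : ℕ → ℝ}

theorem summable_coeff_mul_pow (hc : ∀ n, 1 ≤ n → 0 ≤ c n ∧ c n ≤ M) (hx0 : 0 ≤ x)
    (hx1 : x < 1) : Summable fun n : ℕ => c (n + 1) * x ^ (n + 1) :=
  .of_nonneg_of_le (fun n => mul_nonneg (hc _ (by omega)).1 (pow_nonneg hx0 _))
    (fun n => mul_le_mul_of_nonneg_right (hc _ (by omega)).2 (pow_nonneg hx0 _))
    ((summable_nat_add_iff 1).2 ((summable_geometric_of_lt_one hx0 hx1).mul_left M))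

theorem tsum_coeff_mul_pow_eq (hc : ∀ n, 1 ≤ n → 0 ≤ c n ∧ c n ≤ M) (hx0 : 0 ≤ x)
    (hx1 : x < 1) (m : ℕ) :
    ∑' n : ℕ, c (n + 1) * x ^ (n + 1) = partialPowerSum c m x + powerSumTail c m x :=
  ((summable_coeff_mul_pow hc hx0 hx1).sum_add_tsum_nat_add m).symm

theorem powerSumTail_nonneg (hc : ∀ n, 1 ≤ n → 0 ≤ c n) (hx0 : 0 ≤ x) (m : ℕ) :
    0 ≤ powerSumTail c m x :=
  tsum_nonneg fun _ => mul_nonneg (hc _ (by omega)) (pow_nonneg hx0 _)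

theorem powerSumTail_le (hc : ∀ n, 1 ≤ n → 0 ≤ c n ∧ c n ≤ M) (hx0 : 0 ≤ x) (hx1 : x < 1)
    (m : ℕ) : powerSumTail c m x ≤ M * (x ^ (m + 1) / (1 - x)) := by
  have htail : Summable fun n : ℕ => c (n + m + 1) * x ^ (n + m + 1) :=
    (summable_nat_add_iff m).2 (summable_coeff_mul_pow hc hx0 hx1)
  calc powerSumTail c m x ≤ ∑' n : ℕ, M * x ^ (m + 1) * x ^ n := by
        refine htail.tsum_le_tsum (fun n => ?_) ((summable_geometric_of_lt_one hx0 hx1).mul_left _)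
        calc c (n + m + 1) * x ^ (n + m + 1) ≤ M * x ^ (n + m + 1) :=
              mul_le_mul_of_nonneg_right (hc _ (by omega)).2 (pow_nonneg hx0 _)
          _ = M * x ^ (m + 1) * x ^ n := by ring
    _ = M * (x ^ (m + 1) / (1 - x)) := by
        rw [tsum_mul_left, tsum_geometric_of_lt_one hx0 hx1, div_eq_mul_inv, mul_assoc]

theorem partialPowerSum_le_tsum (hc : ∀ n, 1 ≤ n → 0 ≤ c n ∧ c n ≤ M) (hx0 : 0 ≤ x)
    (hx1 : x < 1) (m : ℕ) :
    partialPowerSum c m x ≤ ∑' n : ℕ, c (n + 1) * x ^ (n + 1) := by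
  rw [tsum_coeff_mul_pow_eq hc hx0 hx1 m]
  linarith [powerSumTail_nonneg (fun n hn => (hc n hn).1) hx0 m]

end BoundedCoefficients

section Roots

variable {M x y c : ℝ} {a b : ℕ → ℝ} {k m : ℕ}

theorem abs_sub_le_of_one_eq_tsum (hm : 1 ≤ m) (ha1 : 1 ≤ a 1)
    (ha : ∀ n, 1 ≤ n → 0 ≤ a n ∧ a n ≤ M) (hb : ∀ n, 1 ≤ n → 0 ≤ b n ∧ b n ≤ M)
    (hba : ∀ i, 1 ≤ i → i ≤ m → b i = a i)
    (hx0 : 0 ≤ x) (hx1 : x < 1) (hy0 : 0 ≤ y) (hy1 : y < 1)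
    (hx : 1 = ∑' n : ℕ, a (n + 1) * x ^ (n + 1)) (hy : 1 = ∑' n : ℕ, b (n + 1) * y ^ (n + 1)) :
    |y - x| ≤ M * (x ^ (m + 1) / (1 - x) + y ^ (m + 1) / (1 - y)) := by
  have hPx := hx.trans (tsum_coeff_mul_pow_eq ha hx0 hx1 m)
  have hPy := hy.trans (tsum_coeff_mul_pow_eq hb hy0 hy1 m)
  rw [partialPowerSum_congr hba] at hPy
  have hTx := powerSumTail_le ha hx0 hx1 m
  have hTy := powerSumTail_le hb hy0 hy1 m
  have hTx0 := powerSumTail_nonneg (fun n hn => (ha n hn).1) hx0 m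
  have hTy0 := powerSumTail_nonneg (fun n hn => (hb n hn).1) hy0 m
  calc |y - x| ≤ |partialPowerSum a m y - partialPowerSum a m x| :=
        abs_sub_le_abs_partialPowerSum_sub hm ha1 (fun n hn => (ha n hn).1) hy0 hx0
    _ = |powerSumTail a m x - powerSumTail b m y| := by congr 1; linarith
    _ ≤ M * (x ^ (m + 1) / (1 - x) + y ^ (m + 1) / (1 - y)) := by
        rw [mul_add]
        exact abs_sub_le_of_nonneg_of_le hTx0 (by linarith) hTy0 (by linarith)

theorem le_of_one_eq_tsum_of_one_lt_partialPowerSum (hk : 1 ≤ k) (hkm : k ≤ m)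
    (ha1 : 1 ≤ a 1) (ha : ∀ n, 1 ≤ n → 0 ≤ a n) (hb : ∀ n, 1 ≤ n → 0 ≤ b n ∧ b n ≤ M)
    (hba : ∀ i, 1 ≤ i → i ≤ m → b i = a i) (hc0 : 0 ≤ c) (hc : 1 < partialPowerSum a k c)
    (hy0 : 0 ≤ y) (hy1 : y < 1) (hy : 1 = ∑' n : ℕ, b (n + 1) * y ^ (n + 1)) : y ≤ c := by
  by_contra! hcy
  have hPy : partialPowerSum a k y ≤ 1 := by
    rw [hy, ← partialPowerSum_congr fun i h1 h2 => hba i h1 (h2.trans hkm)]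
    exact partialPowerSum_le_tsum hb hy0 hy1 k
  linarith [sub_le_partialPowerSum_sub hk ha1 ha hc0 hcy.le]

end Roots

theorem tendsto_pow_succ_div_one_sub {x : ℝ} (hx0 : 0 ≤ x) (hx1 : x < 1) :
    Tendsto (fun m : ℕ => x ^ (m + 1) / (1 - x)) atTop (𝓝 0) := by
  simpa using ((tendsto_pow_atTop_nhds_zero_of_lt_one hx0 hx1).comp
    (tendsto_add_atTop_nat 1)).div_const (1 - x)

theorem tendsto_of_abs_sub_le_tails {M ζ c : ℝ} {z : ℕ → ℝ} (hM : 0 ≤ M) (hζ0 : 0 ≤ ζ)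
    (hζ1 : ζ < 1) (hc0 : 0 ≤ c) (hc1 : c < 1)
    (hz : ∀ᶠ m in atTop, 0 ≤ z m ∧ z m ≤ c ∧
      |z m - ζ| ≤ M * (ζ ^ (m + 1) / (1 - ζ) + z m ^ (m + 1) / (1 - z m))) :
    Tendsto z atTop (𝓝 ζ) := by
  rw [tendsto_iff_norm_sub_tendsto_zero]
  refine squeeze_zero' (.of_forall fun _ => norm_nonneg _) ?_
    (by simpa using ((tendsto_pow_succ_div_one_sub hζ0 hζ1).add
      (tendsto_pow_succ_div_one_sub hc0 hc1)).const_mul M)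
  filter_upwards [hz] with m ⟨hz0, hzc, hbound⟩
  have hzc' : z m ^ (m + 1) / (1 - z m) ≤ c ^ (m + 1) / (1 - c) :=
    div_le_div₀ (pow_nonneg hc0 _) (pow_le_pow_left₀ hz0 hzc _) (by linarith) (by linarith)
  rw [Real.norm_eq_abs]
  exact hbound.trans (by gcongr)

/-- If `1 = ∑ aₙ ζⁿ` and `1 = ∑ b_{m,n} ζₘⁿ` with bounded nonnegative coefficients agreeing
up to index `m`, then `ζₘ → ζ`, with the explicit bound
`|ζₘ − ζ| ≤ M(ζ^{m+1}/(1−ζ) + ζₘ^{m+1}/(1−ζₘ))`. -/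
theorem tendsto_root_of_agreeing_coefficients
    (M : ℝ) (hM : 0 < M)
    (a : ℕ → ℝ) (ha1 : 1 ≤ a 1)
    (habd : ∀ n : ℕ, 1 ≤ n → 0 ≤ a n ∧ a n ≤ M)
    (hane : ¬ (a 1 = 1 ∧ ∀ n : ℕ, 2 ≤ n → a n = 0))
    (ζ : ℝ) (hζ0 : 0 < ζ) (hζ1 : ζ < 1)
    (hζ : 1 = ∑' n : ℕ, a (n + 1) * ζ ^ (n + 1))
    (b : ℕ → ℕ → ℝ) (ζm : ℕ → ℝ)
    (hbbd : ∀ m n : ℕ, 1 ≤ m → 1 ≤ n → 0 ≤ b m n ∧ b m n ≤ M)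
    (hba : ∀ m : ℕ, 1 ≤ m → ∀ i : ℕ, 1 ≤ i → i ≤ m → b m i = a i)
    (hζm0 : ∀ m : ℕ, 1 ≤ m → 0 < ζm m) (hζm1 : ∀ m : ℕ, 1 ≤ m → ζm m < 1)
    (hζms : ∀ m : ℕ, 1 ≤ m → 1 = ∑' n : ℕ, b m (n + 1) * (ζm m) ^ (n + 1)) :
    Tendsto ζm atTop (nhds ζ) ∧
    ∀ m : ℕ, 1 ≤ m →
      |ζm m - ζ| ≤ M * (ζ ^ (m + 1) / (1 - ζ) + (ζm m) ^ (m + 1) / (1 - ζm m)) := by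
  have ha0 : ∀ n, 1 ≤ n → 0 ≤ a n := fun n hn => (habd n hn).1
  have hbound : ∀ m, 1 ≤ m →
      |ζm m - ζ| ≤ M * (ζ ^ (m + 1) / (1 - ζ) + (ζm m) ^ (m + 1) / (1 - ζm m)) := fun m hm =>
    abs_sub_le_of_one_eq_tsum hm ha1 habd (hbbd m · hm) (hba m hm) hζ0.le hζ1
      (hζm0 m hm).le (hζm1 m hm) hζ (hζms m hm)
  obtain ⟨k, hk, hk1⟩ := exists_one_lt_partialPowerSum_one ha1 ha0 hane
  obtain ⟨c, hc0, hc1, hkc⟩ := exists_lt_one_one_lt_partialPowerSum hk1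
  refine ⟨tendsto_of_abs_sub_le_tails hM.le hζ0.le hζ1 hc0 hc1 ?_, hbound⟩
  filter_upwards [eventually_ge_atTop k] with m hkm
  have hm : 1 ≤ m := hk.trans hkm
  exact ⟨(hζm0 m hm).le, le_of_one_eq_tsum_of_one_lt_partialPowerSum hk hkm ha1 ha0
    (hbbd m · hm) (hba m hm) hc0 hkc (hζm0 m hm).le (hζm1 m hm) (hζms m hm), hbound m hm⟩
end

section
/- The function Δ is strictly increasing on [0, ∞): for all real numbers x, y with 0 ≤ x < y, Δ(x) < Δ(y). -/
open Filter

/-- The digit sequence `u_α`: with `b = ⌈α⌉`, `u_α n = (b−1) + ⌈(α−b+1)(n+1)⌉ − ⌈(α−b+1)n⌉`,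
the upper mechanical word of slope `α − b + 1` written over the alphabet `{b−1, b}`. -/
noncomputable def upperWord (α : ℝ) (n : ℕ) : ℤ :=
  (⌈α⌉ - 1) + (⌈(α - ⌈α⌉ + 1) * ((n : ℝ) + 1)⌉ - ⌈(α - ⌈α⌉ + 1) * (n : ℝ)⌉)

/-- `Δ` is the devil's staircase function: `Δ 0 = 1` and, for each `α > 0`, `Δ α` is the
unique real `β > 1` satisfying `∑_{n=0}^∞ u_α(n)·β^{−(n+1)} = 1`. -/
def IsDevilStaircase (Δ : ℝ → ℝ) : Prop :=
  Δ 0 = 1 ∧ ∀ α : ℝ, 0 < α →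
    (1 < Δ α ∧ ∑' n : ℕ, (upperWord α n : ℝ) / (Δ α) ^ (n + 1) = 1) ∧
    ∀ β : ℝ, 1 < β → (∑' n : ℕ, (upperWord α n : ℝ) / β ^ (n + 1) = 1) → β = Δ α

/-
Since `b` is an integer, `u_α n = ⌈α(n+1)⌉ - ⌈αn⌉`, and summation by parts turns
`F(α, β) = ∑ u_α(n) β^{-(n+1)}` into `(1 - β⁻¹) ∑ ⌈αn⌉ β^{-n}`. In this form `F` is strictly
increasing in `α`: the ceilings are monotone in `α`, and `⌈xn⌉ < ⌈yn⌉` as soon as `n(y - x) ≥ 1`.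
The digits being nonnegative, `F` is nonincreasing in `β`. So if `0 < x < y` and `Δ y ≤ Δ x`, then
`1 = F(x, Δ x) ≤ F(x, Δ y) < F(y, Δ y) = 1`.
-/

open Set

noncomputable def upperWordSum (α β : ℝ) : ℝ :=
  ∑' n : ℕ, (upperWord α n : ℝ) / β ^ (n + 1)

lemma upperWord_eq_ceil_sub_ceil (α : ℝ) (n : ℕ) :
    upperWord α n = ⌈α * ((n : ℝ) + 1)⌉ - ⌈α * n⌉ := by
  have h₁ : (α - ⌈α⌉ + 1) * ((n : ℝ) + 1)
      = α * ((n : ℝ) + 1) - ((⌈α⌉ - 1) * ((n : ℤ) + 1) : ℤ) := by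
    push_cast; ring
  have h₂ : (α - ⌈α⌉ + 1) * (n : ℝ) = α * n - ((⌈α⌉ - 1) * (n : ℤ) : ℤ) := by
    push_cast; ring
  rw [upperWord, h₁, h₂, Int.ceil_sub_intCast, Int.ceil_sub_intCast]
  ring

lemma upperWord_nonneg {α : ℝ} (hα : 0 ≤ α) (n : ℕ) : 0 ≤ upperWord α n := by
  rw [upperWord_eq_ceil_sub_ceil, sub_nonneg]
  gcongr
  linarith

lemma exists_ceil_mul_lt_ceil_mul {x y : ℝ} (hxy : x < y) : ∃ n : ℕ, ⌈x * n⌉ < ⌈y * n⌉ := by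
  obtain ⟨n, hn⟩ := exists_nat_gt (y - x)⁻¹
  refine ⟨n, (Int.cast_lt (R := ℝ)).mp ?_⟩
  have hgap : x * n + 1 < y * n := by
    have := (inv_lt_iff_one_lt_mul₀ (sub_pos.mpr hxy)).mp hn
    nlinarith
  calc ((⌈x * n⌉ : ℤ) : ℝ) < x * n + 1 := Int.ceil_lt_add_one _
    _ < y * n := hgap
    _ ≤ ⌈y * n⌉ := Int.le_ceil _

lemma summable_ceil_mul_div_pow {α β : ℝ} (hα : 0 ≤ α) (hβ : 1 < β) :
    Summable fun n : ℕ => (⌈α * n⌉ : ℝ) / β ^ n := by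
  have hr : ‖β⁻¹‖ < 1 := by
    rw [norm_inv, Real.norm_eq_abs, abs_of_pos (by linarith)]
    exact inv_lt_one_of_one_lt₀ hβ
  have hbound : Summable fun n : ℕ => α * ((n : ℝ) ^ 1 * β⁻¹ ^ n) + β⁻¹ ^ n :=
    ((summable_pow_mul_geometric_of_norm_lt_one 1 hr).mul_left α).add
      (summable_geometric_of_norm_lt_one hr)
  refine hbound.of_nonneg_of_le (fun n => ?_) (fun n => ?_)
  · have : (0 : ℝ) ≤ ⌈α * n⌉ := by exact_mod_cast Int.ceil_nonneg (by positivity)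
    positivity
  · have hpow : (0 : ℝ) < β ^ n := by positivity
    rw [div_le_iff₀ hpow, pow_one, inv_pow]
    field_simp
    linarith [Int.ceil_lt_add_one (α * n)]

lemma hasSum_sub_div_pow_succ {c : ℕ → ℝ} {β : ℝ} (hc₀ : c 0 = 0)
    (hc : Summable fun n => c n / β ^ n) :
    HasSum (fun n => (c (n + 1) - c n) / β ^ (n + 1)) ((1 - β⁻¹) * ∑' n, c n / β ^ n) := by
  have hshift : HasSum (fun n => c (n + 1) / β ^ (n + 1)) (∑' n, c n / β ^ n) := by
    simpa [hc₀] using (hasSum_nat_add_iff' 1).mpr hc.hasSum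
  rw [sub_mul, one_mul]
  refine (hshift.sub (hc.hasSum.mul_left β⁻¹)).congr_fun fun n => ?_
  rw [div_eq_mul_inv, pow_succ, mul_inv]
  ring

lemma hasSum_upperWord {α β : ℝ} (hα : 0 ≤ α) (hβ : 1 < β) :
    HasSum (fun n => (upperWord α n : ℝ) / β ^ (n + 1))
      ((1 - β⁻¹) * ∑' n : ℕ, (⌈α * n⌉ : ℝ) / β ^ n) := by
  convert hasSum_sub_div_pow_succ (c := fun n : ℕ => (⌈α * n⌉ : ℝ)) (by simp)
    (summable_ceil_mul_div_pow hα hβ) using 2 with n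
  rw [upperWord_eq_ceil_sub_ceil]
  push_cast
  rfl

lemma upperWordSum_strictMonoOn {β : ℝ} (hβ : 1 < β) :
    StrictMonoOn (fun α => upperWordSum α β) (Ici 0) := by
  intro x hx y hy hxy
  simp only [upperWordSum, (hasSum_upperWord hx hβ).tsum_eq, (hasSum_upperWord hy hβ).tsum_eq]
  have hfactor : 0 < 1 - β⁻¹ := sub_pos.mpr (inv_lt_one_of_one_lt₀ hβ)
  refine mul_lt_mul_of_pos_left ?_ hfactor
  obtain ⟨N, hN⟩ := exists_ceil_mul_lt_ceil_mul hxy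
  refine Summable.tsum_lt_tsum (i := N) (fun n => ?_) ?_
    (summable_ceil_mul_div_pow hx hβ) (summable_ceil_mul_div_pow hy hβ)
  · have : x * n ≤ y * n := by gcongr
    gcongr
  · gcongr

lemma upperWordSum_antitoneOn {α : ℝ} (hα : 0 ≤ α) : AntitoneOn (upperWordSum α) (Ioi 1) := by
  intro β₁ hβ₁ β₂ hβ₂ hβ
  refine Summable.tsum_le_tsum (fun n => ?_) (hasSum_upperWord hα hβ₂).summable
    (hasSum_upperWord hα hβ₁).summable
  have : (0 : ℝ) ≤ upperWord α n := by exact_mod_cast upperWord_nonneg hα n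
  have : (0 : ℝ) < β₁ := zero_lt_one.trans hβ₁
  gcongr

/-- The devil's staircase `Δ` is strictly increasing on `[0, ∞)`. -/
theorem devilStaircase_strictMono (Δ : ℝ → ℝ) (hΔ : IsDevilStaircase Δ) :
    ∀ x y : ℝ, 0 ≤ x → x < y → Δ x < Δ y := by
  intro x y hx hxy
  have hy : 0 < y := hx.trans_lt hxy
  obtain ⟨hΔy, hFy⟩ := (hΔ.2 y hy).1
  rcases hx.eq_or_lt with rfl | hx
  · rwa [hΔ.1]
  obtain ⟨hΔx, hFx⟩ := (hΔ.2 x hx).1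
  by_contra! hle
  have : (1 : ℝ) < 1 := calc
    1 = upperWordSum x (Δ x) := hFx.symm
    _ ≤ upperWordSum x (Δ y) := upperWordSum_antitoneOn hx.le hΔy hΔx hle
    _ < upperWordSum y (Δ y) := upperWordSum_strictMonoOn hΔy hx.le hy.le hxy
    _ = 1 := hFy
  exact lt_irrefl 1 this
end

section
/- The image Δ((0, ∞)) = {Δ(α) : α > 0} has Lebesgue measure zero. -/
/-!
If `⌈α⌉ = k` and `Δ α ≥ b > 1`, the first `n` digits of `u_α` depend only on the ceilings
`⌈s m⌉`, `m ≤ n`, of the multiples of the slope `s`, and these ceilings are reproduced by a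
fraction `q = j / i` with `i, j ≤ n`. Two expansions sharing `n` digits differ by `O(b⁻ⁿ)` at
the same base, while the leading digit `k ≥ 1` makes the value of an expansion decrease in the
base at a rate bounded below. Hence `Δ α` lies within `O(b⁻ⁿ)` of one of the `n²` numbers
`Δ (k - 1 + q)`; as `n² b⁻ⁿ → 0`, each such piece of the image is null, and countably many pieces
cover `Δ((0, ∞))`.
-/

open Filter

open Set Topology MeasureTheory

noncomputable def digitSeries (u : ℕ → ℝ) (β : ℝ) : ℝ := ∑' n, u n / β ^ (n + 1)

section DigitSeries

variable {u v : ℕ → ℝ} {k a b β : ℝ}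

lemma hasSum_div_pow_succ (k : ℝ) (hβ : 1 < β) :
    HasSum (fun n : ℕ => k / β ^ (n + 1)) (k / (β - 1)) := by
  have hβ0 : 0 < β := by linarith
  have hgeom := (hasSum_geometric_of_lt_one (inv_nonneg.2 hβ0.le)
    (inv_lt_one_of_one_lt₀ hβ)).mul_left (k / β)
  have hterm (n : ℕ) : k / β * β⁻¹ ^ n = k / β ^ (n + 1) := by
    rw [inv_pow, pow_succ']
    field_simp
  have hval : k / β * (1 - β⁻¹)⁻¹ = k / (β - 1) := by
    have hβ1 : β - 1 ≠ 0 := by linarith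
    rw [show 1 - β⁻¹ = (β - 1) / β by field_simp, inv_div]
    field_simp
  simpa only [hterm, hval] using hgeom

lemma summable_digitSeries (hu : ∀ n, |u n| ≤ k) (hβ : 1 < β) :
    Summable fun n => u n / β ^ (n + 1) := by
  have hβ0 : 0 < β := by linarith
  refine (hasSum_div_pow_succ k hβ).summable.of_norm_bounded fun n => ?_
  rw [Real.norm_eq_abs, abs_div, abs_of_pos (pow_pos hβ0 _)]
  exact div_le_div_of_nonneg_right (hu n) (by positivity)

lemma abs_digitSeries_le (hu : ∀ n, |u n| ≤ k) (hβ : 1 < β) :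
    |digitSeries u β| ≤ k / (β - 1) := by
  have hβ0 : 0 < β := by linarith
  rw [digitSeries, ← Real.norm_eq_abs]
  refine tsum_of_norm_bounded (hasSum_div_pow_succ k hβ) fun n => ?_
  rw [Real.norm_eq_abs, abs_div, abs_of_pos (pow_pos hβ0 _)]
  exact div_le_div_of_nonneg_right (hu n) (by positivity)

lemma le_add_one_of_digitSeries_eq_one (hu : ∀ n, |u n| ≤ k) (hβ : 1 < β)
    (h : digitSeries u β = 1) : β ≤ k + 1 := by
  have := abs_digitSeries_le hu hβ
  rw [h, abs_one, le_div_iff₀ (by linarith)] at this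
  linarith

lemma abs_digitSeries_sub_le (hu : ∀ i, u i ∈ Icc 0 k) (hv : ∀ i, v i ∈ Icc 0 k)
    (hβ : 1 < β) {n : ℕ} (huv : ∀ i < n, u i = v i) :
    |digitSeries u β - digitSeries v β| ≤ k / β ^ n / (β - 1) := by
  have habs : ∀ {w : ℕ → ℝ}, (∀ i, w i ∈ Icc 0 k) → ∀ i, |w i| ≤ k := fun hw i =>
    (abs_of_nonneg (hw i).1).trans_le (hw i).2
  set w : ℕ → ℝ := fun i => u (i + n) - v (i + n)
  have hw : ∀ i, |w i| ≤ k := fun i => by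
    obtain ⟨hu₀, huk⟩ := hu (i + n)
    obtain ⟨hv₀, hvk⟩ := hv (i + n)
    exact abs_sub_le_iff.2 ⟨by linarith, by linarith⟩
  have hsplit : digitSeries u β - digitSeries v β = digitSeries w β / β ^ n := by
    have hsu := summable_digitSeries (habs hu) hβ
    have hsv := summable_digitSeries (habs hv) hβ
    rw [digitSeries, digitSeries, ← hsu.sum_add_tsum_nat_add n, ← hsv.sum_add_tsum_nat_add n,
      Finset.sum_congr rfl fun i hi => by rw [huv i (Finset.mem_range.1 hi)],
      add_sub_add_left_eq_sub,
      ← ((summable_nat_add_iff n).2 hsu).tsum_sub ((summable_nat_add_iff n).2 hsv), digitSeries,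
      ← tsum_div_const]
    congr 1; ext i
    ring
  have hβ0 : 0 < β := by linarith
  rw [hsplit, abs_div, abs_of_pos (pow_pos hβ0 _), div_right_comm]
  exact div_le_div_of_nonneg_right (abs_digitSeries_le hw hβ) (by positivity)

lemma abs_sub_le_mul_abs_digitSeries_sub (hu : ∀ i, u i ∈ Icc 0 k) (hu0 : 1 ≤ u 0)
    (ha : 1 < a) (hb : 1 < b) : |a - b| ≤ a * b * |digitSeries u a - digitSeries u b| := by
  wlog hab : a ≤ b generalizing a b
  · rw [abs_sub_comm, mul_comm a, abs_sub_comm (digitSeries u a)]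
    exact this hb ha (le_of_not_ge hab)
  have habs : ∀ i, |u i| ≤ k := fun i => (abs_of_nonneg (hu i).1).trans_le (hu i).2
  have ha0 : 0 < a := by linarith
  have hterm : ∀ i, 0 ≤ u i / a ^ (i + 1) - u i / b ^ (i + 1) := fun i => by
    have := (hu i).1
    rw [sub_nonneg]
    gcongr
  have hlead : (b - a) / (a * b) ≤ digitSeries u a - digitSeries u b := calc
    (b - a) / (a * b) ≤ u 0 * (1 / a - 1 / b) := by
      have hdiff : 1 / a - 1 / b = (b - a) / (a * b) := by field_simp
      rw [hdiff]
      exact le_mul_of_one_le_left (div_nonneg (by linarith) (by positivity)) hu0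
    _ = u 0 / a ^ (0 + 1) - u 0 / b ^ (0 + 1) := by ring
    _ ≤ ∑' i, (u i / a ^ (i + 1) - u i / b ^ (i + 1)) :=
      ((summable_digitSeries habs ha).sub (summable_digitSeries habs hb)).le_tsum 0
        fun i _ => hterm i
    _ = digitSeries u a - digitSeries u b :=
      (summable_digitSeries habs ha).tsum_sub (summable_digitSeries habs hb)
  rw [div_le_iff₀' (by positivity)] at hlead
  rw [abs_sub_comm, abs_of_nonneg (by linarith)]
  exact hlead.trans (by gcongr; exact le_abs_self _)

end DigitSeries

section UpperWord

variable {α α' : ℝ}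

noncomputable def mechanicalSlope (α : ℝ) : ℝ := α - ⌈α⌉ + 1

lemma mechanicalSlope_mem_Ioc (α : ℝ) : mechanicalSlope α ∈ Ioc 0 1 := by
  have h₁ := Int.ceil_lt_add_one α
  have h₂ := Int.le_ceil α
  constructor <;> simp only [mechanicalSlope] <;> linarith

lemma upperWord_mem_Icc (α : ℝ) (n : ℕ) : upperWord α n ∈ Icc (⌈α⌉ - 1) ⌈α⌉ := by
  obtain ⟨hs₀, hs₁⟩ := mechanicalSlope_mem_Ioc α
  have hmono : ⌈mechanicalSlope α * n⌉ ≤ ⌈mechanicalSlope α * (n + 1)⌉ :=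
    Int.ceil_le_ceil (by nlinarith)
  have hstep : ⌈mechanicalSlope α * (n + 1)⌉ ≤ ⌈mechanicalSlope α * n⌉ + 1 := by
    rw [← Int.ceil_add_one]
    exact Int.ceil_le_ceil (by nlinarith)
  constructor <;> simp only [upperWord, mechanicalSlope] at hmono hstep ⊢ <;> omega

lemma cast_upperWord_mem_Icc (hα : 0 < α) (n : ℕ) :
    (upperWord α n : ℝ) ∈ Icc 0 (⌈α⌉ : ℝ) := by
  obtain ⟨h₁, h₂⟩ := upperWord_mem_Icc α n
  have := Int.ceil_pos.2 hα
  exact ⟨by exact_mod_cast (by omega : 0 ≤ upperWord α n), by exact_mod_cast h₂⟩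

lemma upperWord_zero (α : ℝ) : upperWord α 0 = ⌈α⌉ := by
  simp [upperWord]

lemma upperWord_eq_of_ceil_mul_eq (hc : ⌈α⌉ = ⌈α'⌉) {n : ℕ}
    (hs : ∀ m ≤ n, ⌈mechanicalSlope α * m⌉ = ⌈mechanicalSlope α' * m⌉) :
    ∀ i < n, upperWord α i = upperWord α' i := fun i hi => by
  have hsucc := hs (i + 1) hi
  push_cast at hsucc
  simp only [upperWord, mechanicalSlope] at hs hsucc ⊢
  rw [hsucc, hs i hi.le, hc]

end UpperWord

noncomputable def fractionsUpTo (n : ℕ) : Finset ℝ :=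
  (Finset.Icc (1 : ℤ) n ×ˢ Finset.Icc (1 : ℤ) n).image fun p => (p.2 : ℝ) / p.1

lemma card_fractionsUpTo_le (n : ℕ) : (fractionsUpTo n).card ≤ n ^ 2 :=
  Finset.card_image_le.trans (by simp [sq])

/-- The ceilings `⌈s m⌉`, `m ≤ n`, are reproduced by `q = min_{1 ≤ m ≤ n} ⌈s m⌉ / m`:
`q ≥ s` gives `⌈s m⌉ ≤ ⌈q m⌉`, and `q m ≤ ⌈s m⌉` gives the converse. -/
lemma exists_mem_fractionsUpTo_ceil_mul_eq {s : ℝ} (hs : s ∈ Ioc 0 1) {n : ℕ} (hn : 1 ≤ n) :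
    ∃ q ∈ fractionsUpTo n, q ∈ Ioc 0 1 ∧ ∀ m ≤ n, ⌈q * m⌉ = ⌈s * m⌉ := by
  obtain ⟨hs₀, hs₁⟩ := hs
  obtain ⟨m₀, hm₀, hmin⟩ := Finset.exists_min_image (Finset.Icc 1 n)
    (fun m : ℕ => (⌈s * m⌉ : ℝ) / m) ⟨1, Finset.mem_Icc.2 ⟨le_rfl, hn⟩⟩
  obtain ⟨hm₀₁, hm₀n⟩ := Finset.mem_Icc.1 hm₀
  have hm₀pos : (0 : ℝ) < m₀ := by exact_mod_cast hm₀₁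
  have hc₁ : 1 ≤ ⌈s * m₀⌉ := Int.ceil_pos.2 (by positivity)
  have hc₂ : ⌈s * m₀⌉ ≤ m₀ := Int.ceil_le.2 (by push_cast; nlinarith)
  have hsq : s ≤ (⌈s * m₀⌉ : ℝ) / m₀ := by
    rw [le_div_iff₀ hm₀pos]; exact Int.le_ceil _
  refine ⟨(⌈s * m₀⌉ : ℝ) / m₀, ?_, ⟨by positivity, ?_⟩, fun m hm => ?_⟩
  · refine Finset.mem_image.2 ⟨((m₀ : ℤ), ⌈s * m₀⌉), ?_, by simp⟩
    simp only [Finset.mem_product, Finset.mem_Icc]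
    omega
  · rw [div_le_one hm₀pos]; exact_mod_cast hc₂
  rcases Nat.eq_zero_or_pos m with rfl | hm₁
  · simp
  have hmpos : (0 : ℝ) < m := by exact_mod_cast hm₁
  refine le_antisymm (Int.ceil_le.2 ?_) (Int.ceil_le_ceil (by gcongr))
  have := hmin m (Finset.mem_Icc.2 ⟨hm₁, hm⟩)
  rwa [le_div_iff₀ hmpos] at this

lemma volume_eq_zero_of_finset_cover {A : Set ℝ} (N : ℕ → ℕ) (r : ℕ → ℝ)
    (hNr : Tendsto (fun n => (N n : ℝ) * r n) atTop (𝓝 0))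
    (hA : ∀ᶠ n in atTop, ∃ C : Finset ℝ, C.card ≤ N n ∧ A ⊆ ⋃ c ∈ C, Metric.closedBall c (r n)) :
    volume A = 0 := by
  have hbound : ∀ᶠ n in atTop, volume A ≤ ENNReal.ofReal (N n * (2 * r n)) := by
    filter_upwards [hA] with n ⟨C, hC, hcover⟩
    calc volume A ≤ volume (⋃ c ∈ C, Metric.closedBall c (r n)) := measure_mono hcover
      _ ≤ ∑ c ∈ C, volume (Metric.closedBall c (r n)) := measure_biUnion_finset_le _ _
      _ = C.card * ENNReal.ofReal (2 * r n) := by simp [Real.volume_closedBall]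
      _ ≤ N n * ENNReal.ofReal (2 * r n) := by gcongr
      _ = ENNReal.ofReal (N n * (2 * r n)) := by
        rw [ENNReal.ofReal_mul (Nat.cast_nonneg _), ENNReal.ofReal_natCast]
  have hlim : Tendsto (fun n => ENNReal.ofReal (N n * (2 * r n))) atTop (𝓝 0) := by
    have := ENNReal.tendsto_ofReal (hNr.const_mul 2)
    simp only [mul_zero, ENNReal.ofReal_zero] at this
    convert this using 3
    ring
  exact nonpos_iff_eq_zero.1 (ge_of_tendsto hlim hbound)

namespace IsDevilStaircase

variable {Δ : ℝ → ℝ} (hΔ : IsDevilStaircase Δ) {α α' : ℝ}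
include hΔ

lemma one_lt (hα : 0 < α) : 1 < Δ α := (hΔ.2 α hα).1.1

lemma digitSeries_eq_one (hα : 0 < α) : digitSeries (fun n => (upperWord α n : ℝ)) (Δ α) = 1 :=
  (hΔ.2 α hα).1.2

lemma le_ceil_add_one (hα : 0 < α) : Δ α ≤ ⌈α⌉ + 1 := by
  have hu := cast_upperWord_mem_Icc hα
  exact le_add_one_of_digitSeries_eq_one (fun n => (abs_of_nonneg (hu n).1).trans_le (hu n).2)
    (hΔ.one_lt hα) (hΔ.digitSeries_eq_one hα)

lemma abs_sub_le_of_upperWord_eq (hα : 0 < α) (hc : ⌈α'⌉ = ⌈α⌉) {n : ℕ}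
    (hpre : ∀ i < n, upperWord α i = upperWord α' i) :
    |Δ α - Δ α'| ≤ (⌈α⌉ + 1) ^ 2 * (⌈α⌉ / Δ α ^ n / (Δ α - 1)) := by
  have hα' : 0 < α' := Int.ceil_pos.1 (hc ▸ Int.ceil_pos.2 hα)
  have hu := cast_upperWord_mem_Icc hα
  have hv := hc ▸ cast_upperWord_mem_Icc hα'
  have hv₀ : (1 : ℝ) ≤ upperWord α' 0 := by
    rw [upperWord_zero, hc]; exact_mod_cast Int.ceil_pos.2 hα
  have hβ := hΔ.le_ceil_add_one hα
  have hβ' := hc ▸ hΔ.le_ceil_add_one hα'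
  have hβ₁ := hΔ.one_lt hα
  have hβ'₁ := hΔ.one_lt hα'
  calc |Δ α - Δ α'|
      ≤ Δ α * Δ α' * |digitSeries (fun n => (upperWord α' n : ℝ)) (Δ α)
          - digitSeries (fun n => (upperWord α' n : ℝ)) (Δ α')| :=
        abs_sub_le_mul_abs_digitSeries_sub hv hv₀ hβ₁ hβ'₁
    _ = Δ α * Δ α' * |digitSeries (fun n => (upperWord α n : ℝ)) (Δ α)
          - digitSeries (fun n => (upperWord α' n : ℝ)) (Δ α)| := by
        rw [hΔ.digitSeries_eq_one hα, hΔ.digitSeries_eq_one hα', abs_sub_comm]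
    _ ≤ (⌈α⌉ + 1) ^ 2 * (⌈α⌉ / Δ α ^ n / (Δ α - 1)) := by
        gcongr
        · nlinarith
        · exact abs_digitSeries_sub_le hu hv hβ₁ fun i hi => by exact_mod_cast hpre i hi

lemma exists_mem_fractionsUpTo_abs_sub_le (hα : 0 < α) {n : ℕ} (hn : 1 ≤ n) :
    ∃ q ∈ fractionsUpTo n,
      |Δ α - Δ (⌈α⌉ - 1 + q)| ≤ (⌈α⌉ + 1) ^ 2 * (⌈α⌉ / Δ α ^ n / (Δ α - 1)) := by
  obtain ⟨q, hq, ⟨hq₀, hq₁⟩, hceil⟩ :=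
    exists_mem_fractionsUpTo_ceil_mul_eq (mechanicalSlope_mem_Ioc α) hn
  have hc : ⌈(⌈α⌉ - 1 + q : ℝ)⌉ = ⌈α⌉ := Int.ceil_eq_iff.2 ⟨by linarith, by linarith⟩
  have hslope : mechanicalSlope (⌈α⌉ - 1 + q) = q := by
    rw [mechanicalSlope, hc]; ring
  refine ⟨q, hq, hΔ.abs_sub_le_of_upperWord_eq hα hc ?_⟩
  exact upperWord_eq_of_ceil_mul_eq hc.symm fun m hm => by rw [hslope, hceil m hm]

lemma volume_image_ceil_eq_of_le_eq_zero (k : ℤ) {b : ℝ} (hb : 1 < b) :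
    volume (Δ '' {α | 0 < α ∧ ⌈α⌉ = k ∧ b ≤ Δ α}) = 0 := by
  refine volume_eq_zero_of_finset_cover (fun n => n ^ 2)
    (fun n => (k + 1) ^ 2 * (k / b ^ n / (b - 1))) ?_ ?_
  · have := (tendsto_pow_const_mul_const_pow_of_abs_lt_one 2 (r := b⁻¹)
      (by rw [abs_of_pos (by positivity)]; exact inv_lt_one_of_one_lt₀ hb)).const_mul
      ((k + 1) ^ 2 * k / (b - 1))
    rw [mul_zero] at this
    convert this using 2 with n
    push_cast
    rw [inv_pow]
    ring
  filter_upwards [eventually_ge_atTop 1] with n hn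
  refine ⟨(fractionsUpTo n).image fun q => Δ (k - 1 + q),
    Finset.card_image_le.trans (card_fractionsUpTo_le n), ?_⟩
  rintro _ ⟨α, ⟨hα, rfl, hbα⟩, rfl⟩
  obtain ⟨q, hq, hdist⟩ := hΔ.exists_mem_fractionsUpTo_abs_sub_le hα hn
  refine mem_biUnion (Finset.mem_image_of_mem _ hq) (hdist.trans ?_)
  have : (0 : ℝ) ≤ ⌈α⌉ := by exact_mod_cast (Int.ceil_pos.2 hα).le
  gcongr

end IsDevilStaircase

/-- The image `Δ((0,∞))` has Lebesgue measure zero. -/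
theorem devilStaircase_image_measure_zero (Δ : ℝ → ℝ) (hΔ : IsDevilStaircase Δ) :
    MeasureTheory.volume (Δ '' Set.Ioi (0 : ℝ)) = 0 := by
  have hcover : Δ '' Ioi 0 ⊆
      ⋃ (k : ℤ) (m : ℕ), Δ '' {α | 0 < α ∧ ⌈α⌉ = k ∧ 1 + 1 / ((m : ℝ) + 1) ≤ Δ α} := by
    rintro _ ⟨α, hα, rfl⟩
    obtain ⟨m, hm⟩ := exists_nat_one_div_lt (sub_pos.2 (hΔ.one_lt hα))
    exact mem_iUnion₂.2 ⟨⌈α⌉, m, α, ⟨hα, rfl, by linarith⟩, rfl⟩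
  refine measure_mono_null hcover (measure_iUnion_null fun k => measure_iUnion_null fun m => ?_)
  exact hΔ.volume_image_ceil_eq_of_le_eq_zero k (lt_add_of_pos_right 1 (by positivity))
end

section
/- If α > 0 is rational, then Δ(α) is an algebraic integer, i.e., Δ(α) is integral over ℤ. -/
/-!
If `α = r` is rational, the slope `s = r - ⌈r⌉ + 1` of the mechanical word satisfies
`s * den s ∈ ℤ`, so the digits `u_α` are periodic with period `q = den s`. Splitting
`1 = ∑ u_α(n) β^{-(n+1)}` after `q` terms, periodicity makes the tail equal to `β^{-q}`,
whence `β^q = ∑_{i<q} u_α(i) β^{q-1-i} + 1`: `β = Δ(α)` is a root of a monic integer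
polynomial.
-/

open Filter

open Finset Polynomial

theorem pow_eq_sum_add_one_of_periodic {K : Type*} [Field K] [TopologicalSpace K]
    [IsTopologicalRing K] [T2Space K] {β : K} (hβ : β ≠ 0) {u : ℕ → K} {q : ℕ}
    (hu : Function.Periodic u q) (hsum : ∑' n, u n / β ^ (n + 1) = 1) :
    β ^ q = ∑ i ∈ range q, u i * β ^ (q - 1 - i) + 1 := by
  -- a non-summable series has `tsum` equal to `0`, not `1`
  have hsummable : Summable fun n ↦ u n / β ^ (n + 1) := by
    by_contra h
    simp [tsum_eq_zero_of_not_summable h] at hsum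
  have htail : ∑' n, u (n + q) / β ^ (n + q + 1) = 1 / β ^ q := by
    have hshift : ∀ n, u (n + q) / β ^ (n + q + 1) = u n / β ^ (n + 1) / β ^ q := fun n ↦ by
      rw [hu, add_right_comm, pow_add, div_div]
    rw [tsum_congr hshift, tsum_div_const, hsum]
  have hsplit := hsummable.sum_add_tsum_nat_add q
  rw [htail, hsum] at hsplit
  have hterm : ∀ i ∈ range q, β ^ q * (u i / β ^ (i + 1)) = u i * β ^ (q - 1 - i) := by
    intro i hi
    obtain ⟨k, rfl⟩ := Nat.exists_eq_add_of_lt (mem_range.mp hi)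
    rw [show i + k + 1 - 1 - i = k by omega, add_right_comm, pow_add]
    field_simp
  calc β ^ q = β ^ q * (∑ i ∈ range q, u i / β ^ (i + 1) + 1 / β ^ q) := by
        rw [hsplit, mul_one]
    _ = ∑ i ∈ range q, u i * β ^ (q - 1 - i) + 1 := by
      rw [mul_add, mul_sum, sum_congr rfl hterm, mul_one_div_cancel (pow_ne_zero q hβ)]

theorem degree_sum_C_mul_X_pow_add_one_lt {R : Type*} [CommRing R] (c : ℕ → R) {q : ℕ}
    (hq : 0 < q) :
    (∑ i ∈ range q, C (c i) * X ^ (q - 1 - i) + 1).degree < (q : WithBot ℕ) := by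
  rw [← mem_degreeLT]
  refine add_mem (sum_mem fun i _ ↦ ?_) (mem_degreeLT.2 ?_)
  · rw [← smul_eq_C_mul]
    refine Submodule.smul_mem _ _ (mem_degreeLT.2 ((degree_X_pow_le _).trans_lt ?_))
    exact_mod_cast (by omega : q - 1 - i < q)
  · exact degree_one_le.trans_lt (by exact_mod_cast hq)

theorem isIntegral_of_pow_eq_aeval {R A : Type*} [CommRing R] [Ring A] [Algebra R A] {x : A}
    {p : R[X]} {n : ℕ} (hp : p.degree < n) (h : x ^ n = aeval x p) : IsIntegral R x :=
  ⟨X ^ n - p, monic_X_pow_sub hp, by simp [← aeval_def, h]⟩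

theorem upperWord_periodic {α : ℝ} {p : ℤ} {q : ℕ} (h : (α - ⌈α⌉ + 1) * q = p) :
    Function.Periodic (upperWord α) q := by
  intro n
  have hshift : ∀ x : ℝ, (α - ⌈α⌉ + 1) * (x + q) = (α - ⌈α⌉ + 1) * x + p := fun x ↦ by
    rw [← h]; ring
  simp only [upperWord, Nat.cast_add, add_right_comm (n : ℝ) (q : ℝ) 1, hshift,
    Int.ceil_add_intCast]
  ring

theorem upperWord_ratCast_periodic (r : ℚ) :
    Function.Periodic (upperWord r) (r - ⌈r⌉ + 1).den :=
  upperWord_periodic <| by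
    rw [Rat.ceil_cast]
    exact_mod_cast Rat.mul_den_eq_num (r - ⌈r⌉ + 1)

/-- If `α > 0` is rational, then `Δ(α)` is an algebraic integer. -/
theorem devilStaircase_algebraic_integer_at_rational (Δ : ℝ → ℝ) (hΔ : IsDevilStaircase Δ)
    (α : ℝ) (h0 : 0 < α) (hrat : ∃ r : ℚ, (r : ℝ) = α) :
    IsIntegral ℤ (Δ α) := by
  obtain ⟨r, rfl⟩ := hrat
  obtain ⟨⟨hΔ_gt_one, hsum⟩, -⟩ := hΔ.2 _ h0
  have hroot := pow_eq_sum_add_one_of_periodic (zero_lt_one.trans hΔ_gt_one).ne'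
    ((upperWord_ratCast_periodic r).comp ((↑) : ℤ → ℝ)) hsum
  refine isIntegral_of_pow_eq_aeval
    (degree_sum_C_mul_X_pow_add_one_lt (upperWord r) (r - ⌈r⌉ + 1).den_pos) ?_
  simpa using hroot
end

section
/- Let b ≥ 1 be an integer, let p, q be coprime integers with 0 < p < q, and set α = b − 1 + p/q. Suppose β₊ is the right limit of Δ at α, i.e., Δ(x) → β₊ as x → α from the right. Define v : ℕ → ℤ by v(0) = b and v(n) = (b − 1) + ⌊(n+1)p/q⌋ − ⌊n·p/q⌋ for n ≥ 1 (the periodic word b·(z_{p,q}·b·(b−1))^ω over the alphabet {b−1, b}). Then ∑_{n=0}^∞ v(n)·β₊^{−(n+1)} = 1; that is, the β₊-expansion of 1 is b(z_{p,q}b(b−1))^ω. -/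
open Filter Topology Finset

/-- The periodic word `b·(z_{p,q}·b·(b−1))^ω` over `{b−1, b}`:
`v 0 = b` and `v n = (b−1) + ⌊(n+1)p/q⌋ − ⌊np/q⌋` for `n ≥ 1`. -/
def upperSCWord (b : ℤ) (p q : ℕ) (n : ℕ) : ℤ :=
  if n = 0 then b
  else (b - 1) + (⌊(((n : ℚ) + 1) * p) / q⌋ - ⌊((n : ℚ) * p) / q⌋)

/-!
Let `r = p/q`. As `x ↓ b − 1 + r`, the slope `x − b + 1` of `u_x` decreases to `r`, so for each
`m ≥ 1` eventually `⌈(x − b + 1)m⌉ = ⌊rm⌋ + 1`: every fixed digit `u_x(n)` is eventually `v(n)`.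
The first `N` digits of `u_x` sum to at least `2` once `rN ≥ 1`, so `Δ(x)^N ≥ 2` and hence
`β₊ > 1`. The digits lie in `[0, b]`, so near `β₊` the series `∑ u_x(n) Δ(x)^{−(n+1)} = 1` are
dominated by one geometric series, and dominated convergence gives `∑ v(n) β₊^{−(n+1)} = 1`.
-/

lemma ceil_mul_le_ceil_mul_succ {s : ℝ} (hs : 0 ≤ s) (n : ℕ) : ⌈s * n⌉ ≤ ⌈s * (n + 1)⌉ :=
  Int.ceil_le_ceil (by nlinarith)

lemma ceil_mul_succ_le_ceil_mul_add_one {s : ℝ} (hs : s ≤ 1) (n : ℕ) :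
    ⌈s * (n + 1)⌉ ≤ ⌈s * n⌉ + 1 := by
  rw [← Int.ceil_add_one]
  exact Int.ceil_le_ceil (by linarith)

lemma ceil_sub_one_le_upperWord (x : ℝ) (n : ℕ) : ⌈x⌉ - 1 ≤ upperWord x n := by
  have := ceil_mul_le_ceil_mul_succ (s := x - ⌈x⌉ + 1) (by linarith [Int.ceil_lt_add_one x]) n
  unfold upperWord
  omega

lemma upperWord_le_ceil (x : ℝ) (n : ℕ) : upperWord x n ≤ ⌈x⌉ := by
  have := ceil_mul_succ_le_ceil_mul_add_one (s := x - ⌈x⌉ + 1) (by linarith [Int.le_ceil x]) n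
  unfold upperWord
  omega

lemma upperWord_nonneg_s10 {x : ℝ} (hx : 0 < x) (n : ℕ) : 0 ≤ upperWord x n := by
  linarith [ceil_sub_one_le_upperWord x n, Int.ceil_pos.2 hx]

lemma sum_range_upperWord (x : ℝ) (N : ℕ) :
    ∑ n ∈ range N, upperWord x n = (⌈x⌉ - 1) * N + ⌈(x - ⌈x⌉ + 1) * N⌉ := by
  have htel := sum_range_sub (fun n : ℕ => ⌈(x - ⌈x⌉ + 1) * (n : ℝ)⌉) N
  push_cast at htel
  simp only [upperWord, sum_add_distrib, sum_const, card_range, nsmul_eq_mul, htel]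
  simp [mul_comm]

lemma two_le_sum_range_upperWord {x : ℝ} (hx : 0 < x) {N : ℕ} (h : 1 < (x - ⌈x⌉ + 1) * N) :
    2 ≤ ∑ n ∈ range N, upperWord x n := by
  have hslope : 1 < ⌈(x - ⌈x⌉ + 1) * N⌉ := Int.lt_ceil.2 (by exact_mod_cast h)
  have hbase : 0 ≤ (⌈x⌉ - 1) * (N : ℤ) :=
    mul_nonneg (by linarith [Int.ceil_pos.2 hx]) (by positivity)
  rw [sum_range_upperWord]
  omega

lemma sum_range_le_pow_of_tsum_div_pow_eq_one {d : ℕ → ℝ} {β : ℝ} (hd : ∀ n, 0 ≤ d n)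
    (hβ : 1 ≤ β) (h : ∑' n, d n / β ^ (n + 1) = 1) (N : ℕ) :
    ∑ n ∈ range N, d n ≤ β ^ N := by
  have hsum : Summable fun n => d n / β ^ (n + 1) := by
    by_contra hs
    rw [tsum_eq_zero_of_not_summable hs] at h
    exact zero_ne_one h
  rw [← div_le_one (by positivity), sum_div]
  calc ∑ n ∈ range N, d n / β ^ N
      ≤ ∑ n ∈ range N, d n / β ^ (n + 1) := sum_le_sum fun n hn =>
        div_le_div_of_nonneg_left (hd n) (by positivity) (pow_le_pow_right₀ hβ (mem_range.1 hn))
    _ ≤ 1 := h ▸ hsum.sum_le_tsum _ fun n _ => div_nonneg (hd n) (by positivity)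

lemma IsDevilStaircase.two_le_pow {Δ : ℝ → ℝ} (hΔ : IsDevilStaircase Δ) {x : ℝ} (hx : 0 < x)
    {N : ℕ} (h : 1 < (x - ⌈x⌉ + 1) * N) : 2 ≤ Δ x ^ N := by
  obtain ⟨⟨hβ, hsum⟩, -⟩ := hΔ.2 x hx
  calc (2 : ℝ) ≤ ∑ n ∈ range N, (upperWord x n : ℝ) := by
        exact_mod_cast two_le_sum_range_upperWord hx h
    _ ≤ Δ x ^ N := sum_range_le_pow_of_tsum_div_pow_eq_one
        (fun n => by exact_mod_cast upperWord_nonneg_s10 hx n) hβ.le hsum N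

lemma eventually_pos_nhdsGT {a : ℝ} (ha : 0 ≤ a) : ∀ᶠ x in 𝓝[>] a, 0 < x :=
  eventually_nhdsWithin_of_forall fun _ hx => ha.trans_lt hx

lemma eventually_ceil_mul_eq_floor_add_one (r : ℝ) {m : ℝ} (hm : 0 < m) :
    ∀ᶠ s in 𝓝[>] r, ⌈s * m⌉ = ⌊r * m⌋ + 1 := by
  have hr : r < (⌊r * m⌋ + 1) / m := by
    rw [lt_div_iff₀ hm]
    exact Int.lt_floor_add_one _
  filter_upwards [Ioo_mem_nhdsGT hr] with s ⟨hrs, hs⟩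
  rw [lt_div_iff₀ hm] at hs
  rw [Int.ceil_eq_iff]
  push_cast
  constructor <;> nlinarith [Int.floor_le (r * m)]

lemma eventually_ceil_eq (b : ℤ) {r : ℝ} (hr0 : 0 ≤ r) (hr1 : r < 1) :
    ∀ᶠ x in 𝓝[>] ((b : ℝ) - 1 + r), ⌈x⌉ = b := by
  filter_upwards [Ioo_mem_nhdsGT (by linarith : (b : ℝ) - 1 + r < b)] with x hx
  exact Int.ceil_eq_iff.2 ⟨by linarith [hx.1], hx.2.le⟩

noncomputable def rightLimitWord (b : ℤ) (r : ℝ) (n : ℕ) : ℤ :=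
  if n = 0 then b else (b - 1) + (⌊r * (n + 1)⌋ - ⌊r * n⌋)

lemma eventually_upperWord_eq (b : ℤ) {r : ℝ} (hr0 : 0 < r) (hr1 : r < 1) (n : ℕ) :
    ∀ᶠ x in 𝓝[>] ((b : ℝ) - 1 + r), upperWord x n = rightLimitWord b r n := by
  have hshift : Tendsto (fun x : ℝ => x - (b - 1)) (𝓝[>] ((b : ℝ) - 1 + r)) (𝓝[>] r) := by
    have h := (map_subRight_nhdsGT (c := (b : ℝ) - 1) (a := b - 1 + r)).le
    rwa [add_sub_cancel_left] at h
  have hslope : ∀ m : ℕ, 0 < m → ∀ᶠ x : ℝ in 𝓝[>] ((b : ℝ) - 1 + r),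
      ⌈(x - b + 1) * m⌉ = ⌊r * m⌋ + 1 := fun m hm => by
    filter_upwards [hshift.eventually (eventually_ceil_mul_eq_floor_add_one r
      (Nat.cast_pos.2 hm))] with x hx
    rwa [sub_sub_eq_add_sub, add_sub_right_comm] at hx
  have hceil := eventually_ceil_eq b hr0.le hr1
  rcases n.eq_zero_or_pos with rfl | hn
  · filter_upwards [hceil, hslope 1 one_pos] with x hx h1
    simp only [Nat.cast_one, mul_one, Int.floor_eq_zero_iff.2 ⟨hr0.le, hr1⟩] at h1
    simp [upperWord, rightLimitWord, hx, h1]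
  · filter_upwards [hceil, hslope (n + 1) n.succ_pos, hslope n hn] with x hx h1 h0
    push_cast at h1
    rw [upperWord, rightLimitWord, hx, if_neg hn.ne', h1, h0]
    ring

lemma upperSCWord_eq_rightLimitWord (b : ℤ) (p q n : ℕ) :
    upperSCWord b p q n = rightLimitWord b (p / q) n := by
  simp only [upperSCWord, rightLimitWord, ← Rat.floor_cast (α := ℝ)]
  push_cast
  simp only [div_mul_eq_mul_div, mul_comm]

lemma tendsto_tsum_div_pow {ι : Type*} {l : Filter ι} {d : ι → ℕ → ℝ} {e : ℕ → ℝ}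
    {β : ι → ℝ} {β₀ B : ℝ} (hd : ∀ n, Tendsto (fun i => d i n) l (𝓝 (e n)))
    (hB : ∀ᶠ i in l, ∀ n, |d i n| ≤ B) (hβ : Tendsto β l (𝓝 β₀)) (hβ₀ : 1 < β₀) :
    Tendsto (fun i => ∑' n, d i n / β i ^ (n + 1)) l (𝓝 (∑' n, e n / β₀ ^ (n + 1))) := by
  obtain ⟨γ, hγ1, hγβ⟩ := exists_between hβ₀
  have hγ0 : 0 < γ := one_pos.trans hγ1
  refine tendsto_tsum_of_dominated_convergence (bound := fun n => B * γ⁻¹ ^ (n + 1)) ?_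
    (fun n => (hd n).div (hβ.pow _) (pow_ne_zero _ (by positivity))) ?_
  · exact ((summable_geometric_of_lt_one (by positivity) (inv_lt_one_of_one_lt₀ hγ1)).mul_left
      (B * γ⁻¹)).congr fun n => by ring
  · filter_upwards [hB, hβ.eventually (lt_mem_nhds hγβ)] with i hBi hβi n
    have hβi0 : 0 < β i := hγ0.trans hβi
    rw [norm_div, norm_pow, Real.norm_eq_abs, Real.norm_eq_abs, abs_of_pos hβi0,
      div_eq_mul_inv, ← inv_pow]
    exact mul_le_mul (hBi n) (pow_le_pow_left₀ (inv_nonneg.2 hβi0.le)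
      ((inv_le_inv₀ hβi0 hγ0).2 hβi.le) _) (by positivity) ((abs_nonneg _).trans (hBi n))

section RightLimit

variable {Δ : ℝ → ℝ} {b : ℤ} {r β₀ : ℝ}

lemma IsDevilStaircase.one_lt_of_tendsto_nhdsGT (hΔ : IsDevilStaircase Δ) (hb : 1 ≤ b)
    (hr0 : 0 < r) (hr1 : r < 1) (h : Tendsto Δ (𝓝[>] ((b : ℝ) - 1 + r)) (𝓝 β₀)) : 1 < β₀ := by
  have hpos := eventually_pos_nhdsGT (a := (b : ℝ) - 1 + r)
    (by linarith [(by exact_mod_cast hb : (1 : ℝ) ≤ b)])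
  set N := ⌈r⁻¹⌉₊
  have hN : 1 ≤ r * N := (inv_le_iff_one_le_mul₀' hr0).1 (Nat.le_ceil _)
  have hpow : ∀ᶠ x in 𝓝[>] ((b : ℝ) - 1 + r), 2 ≤ Δ x ^ N := by
    filter_upwards [hpos, eventually_ceil_eq b hr0.le hr1, self_mem_nhdsWithin] with x hx hxb hrx
    refine hΔ.two_le_pow hx ?_
    have hN0 : (0 : ℝ) < N := by positivity
    rw [hxb]
    nlinarith [Set.mem_Ioi.1 hrx]
  have h0 : 0 ≤ β₀ :=
    ge_of_tendsto h (hpos.mono fun x hx => zero_le_one.trans (hΔ.2 x hx).1.1.le)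
  exact lt_of_pow_lt_pow_left₀ N h0
    (by linarith [one_pow (M := ℝ) N, ge_of_tendsto (h.pow N) hpow])

theorem IsDevilStaircase.tsum_rightLimitWord_div_pow_eq_one (hΔ : IsDevilStaircase Δ)
    (hb : 1 ≤ b) (hr0 : 0 < r) (hr1 : r < 1) (h : Tendsto Δ (𝓝[>] ((b : ℝ) - 1 + r)) (𝓝 β₀)) :
    ∑' n, (rightLimitWord b r n : ℝ) / β₀ ^ (n + 1) = 1 := by
  have hpos := eventually_pos_nhdsGT (a := (b : ℝ) - 1 + r)
    (by linarith [(by exact_mod_cast hb : (1 : ℝ) ≤ b)])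
  have hdig : ∀ n, Tendsto (fun x => (upperWord x n : ℝ)) (𝓝[>] ((b : ℝ) - 1 + r))
      (𝓝 (rightLimitWord b r n)) := fun n =>
    tendsto_const_nhds.congr' <| (eventually_upperWord_eq b hr0 hr1 n).mono fun x hx => by
      rw [← hx]
  have hbound : ∀ᶠ x in 𝓝[>] ((b : ℝ) - 1 + r), ∀ n, |(upperWord x n : ℝ)| ≤ b := by
    filter_upwards [hpos, eventually_ceil_eq b hr0.le hr1] with x hx hxb n
    rw [abs_of_nonneg (by exact_mod_cast upperWord_nonneg_s10 hx n), ← hxb]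
    exact_mod_cast upperWord_le_ceil x n
  have hone : ∀ᶠ x in 𝓝[>] ((b : ℝ) - 1 + r), ∑' n, (upperWord x n : ℝ) / Δ x ^ (n + 1) = 1 :=
    hpos.mono fun x hx => (hΔ.2 x hx).1.2
  have hlim := tendsto_tsum_div_pow hdig hbound h (hΔ.one_lt_of_tendsto_nhdsGT hb hr0 hr1 h)
  exact tendsto_nhds_unique (hlim.congr' hone) tendsto_const_nhds

end RightLimit

theorem upper_self_christoffel_expansion_general (Δ : ℝ → ℝ) (hΔ : IsDevilStaircase Δ)
    (b : ℤ) (hb : 1 ≤ b) (p q : ℕ) (hp : 0 < p) (hpq : p < q)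
    (βp : ℝ)
    (hβp : Tendsto Δ
      (nhdsWithin ((b : ℝ) - 1 + (p : ℝ) / (q : ℝ)) (Set.Ioi ((b : ℝ) - 1 + (p : ℝ) / (q : ℝ))))
      (nhds βp)) :
    ∑' n : ℕ, (upperSCWord b p q n : ℝ) / βp ^ (n + 1) = 1 := by
  have hq : (0 : ℝ) < q := by exact_mod_cast hp.trans hpq
  simpa only [upperSCWord_eq_rightLimitWord] using
    hΔ.tsum_rightLimitWord_div_pow_eq_one hb (by positivity)
      ((div_lt_one hq).2 (by exact_mod_cast hpq)) hβp

/-- If `β₊` is the right limit of `Δ` at `α = b − 1 + p/q`, then the `β₊`-expansion of 1 is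
the word `b(z_{p,q}b(b−1))^ω`, i.e. `∑ v(n)·β₊^{−(n+1)} = 1`. -/
theorem upper_self_christoffel_expansion (Δ : ℝ → ℝ) (hΔ : IsDevilStaircase Δ)
    (b : ℤ) (hb : 1 ≤ b) (p q : ℕ) (hp : 0 < p) (hpq : p < q) (hcop : Nat.Coprime p q)
    (βp : ℝ)
    (hβp : Tendsto Δ
      (nhdsWithin ((b : ℝ) - 1 + (p : ℝ) / (q : ℝ)) (Set.Ioi ((b : ℝ) - 1 + (p : ℝ) / (q : ℝ))))
      (nhds βp)) :
    ∑' n : ℕ, (upperSCWord b p q n : ℝ) / βp ^ (n + 1) = 1 :=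
  upper_self_christoffel_expansion_general Δ hΔ b hb p q hp hpq βp hβp
end

section
/- The following limits hold: (a) Δ(α) → 1 as α → 0 from the right; (b) for every integer b ≥ 1, Δ(x) → (b + 2 + √(b² + 4b))/2 as x → b from the right; (c) Δ(α) − ⌈α⌉ → 1 as α → ∞. -/
/-!
Put `x = 1/β`, `s = α - ⌈α⌉ + 1` and `c n = ⌈s n⌉`. Summation by parts turns the defining
equation of `Δ α` into `(⌈α⌉ - 1) x / (1 - x) + (1 - x) ∑_{n ≥ 1} c n xⁿ = 1`, and the elementary
bounds `1 ≤ c n ≤ min (n, s n + 1)` for `n ≥ 1` then give, since `⌈α⌉ - 1 + s = α`,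
`Δ α ≤ ⌈α⌉ + 1` and `upperRoot (⌈α⌉ + 1) ≤ Δ α ≤ upperRoot (α + 2)`, where `upperRoot t` is the
larger root of `X² - t X + 1`. As `upperRoot` is continuous, `upperRoot 2 = 1` and
`upperRoot (t + 1) ≥ t + 1 - 1/t`, the three limits follow by squeezing.
-/

open Filter

noncomputable def upperRoot (t : ℝ) : ℝ := (t + √(t ^ 2 - 4)) / 2

section upperRoot

variable {t β : ℝ}

lemma le_upperRoot (ht : 2 ≤ t) (h : β ^ 2 - t * β + 1 ≤ 0) : β ≤ upperRoot t := by
  have hsq := Real.sq_sqrt (show 0 ≤ t ^ 2 - 4 by nlinarith)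
  have := Real.sqrt_nonneg (t ^ 2 - 4)
  unfold upperRoot
  nlinarith

lemma upperRoot_le (ht : 2 ≤ t) (hβ : 1 < β) (h : 0 ≤ β ^ 2 - t * β + 1) : upperRoot t ≤ β := by
  have hsq := Real.sq_sqrt (show 0 ≤ t ^ 2 - 4 by nlinarith)
  have := Real.sqrt_nonneg (t ^ 2 - 4)
  -- the smaller root `(t - √(t² - 4)) / 2` is at most `1`, hence below `β`
  have hsmall : t - 2 ≤ √(t ^ 2 - 4) := Real.le_sqrt_of_sq_le (by nlinarith)
  unfold upperRoot
  nlinarith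

lemma upperRoot_two : upperRoot 2 = 1 := by norm_num [upperRoot]

lemma upperRoot_add_two (t : ℝ) : upperRoot (t + 2) = (t + 2 + √(t ^ 2 + 4 * t)) / 2 := by
  rw [upperRoot]; ring_nf

@[continuity, fun_prop]
lemma continuous_upperRoot : Continuous upperRoot := by unfold upperRoot; fun_prop

lemma upperRoot_sq_sub (ht : 2 ≤ t) : upperRoot t ^ 2 - t * upperRoot t + 1 = 0 := by
  have hsq := Real.sq_sqrt (show 0 ≤ t ^ 2 - 4 by nlinarith)
  unfold upperRoot; linear_combination hsq / 4

lemma one_sub_inv_le_upperRoot_add_one_sub (ht : 1 ≤ t) : 1 - t⁻¹ ≤ upperRoot (t + 1) - t := by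
  have ht0 : 0 < t := by linarith
  have hroot := upperRoot_sq_sub (show 2 ≤ t + 1 by linarith)
  have hge : t ≤ upperRoot (t + 1) := by
    have := Real.sqrt_nonneg ((t + 1) ^ 2 - 4)
    have : t - 1 ≤ √((t + 1) ^ 2 - 4) := Real.le_sqrt_of_sq_le (by nlinarith)
    unfold upperRoot; linarith
  have hne : upperRoot (t + 1) ≠ 0 := by linarith
  have : 1 - (upperRoot (t + 1))⁻¹ = upperRoot (t + 1) - t := by
    field_simp; linear_combination -hroot
  rw [← this]
  gcongr

end upperRoot

lemma hasSum_sub_mul_pow_succ {R : Type*} [CommRing R] [TopologicalSpace R] [IsTopologicalRing R]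
    {c : ℕ → R} {x G : R} (h0 : c 0 = 0) (hG : HasSum (fun n => c (n + 1) * x ^ (n + 1)) G) :
    HasSum (fun n => (c (n + 1) - c n) * x ^ (n + 1)) ((1 - x) * G) := by
  have hshift : HasSum (fun n => c n * x ^ (n + 1)) (x * G) := by
    refine (hasSum_nat_add_iff' 1).mp ?_
    simp only [Finset.sum_range_one, h0, zero_mul, sub_zero, pow_succ _ (_ + 1)]
    simpa only [mul_comm, mul_left_comm] using hG.mul_left x
  simpa only [sub_mul, one_mul] using hG.sub hshift

section geometric

variable {x : ℝ}

lemma hasSum_pow_succ (hx0 : 0 ≤ x) (hx1 : x < 1) :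
    HasSum (fun n : ℕ => x ^ (n + 1)) (x / (1 - x)) := by
  simpa [pow_succ', div_eq_mul_inv] using (hasSum_geometric_of_lt_one hx0 hx1).mul_left x

lemma hasSum_succ_mul_pow_succ (hx0 : 0 ≤ x) (hx1 : x < 1) :
    HasSum (fun n : ℕ => ((n : ℝ) + 1) * x ^ (n + 1)) (x / (1 - x) ^ 2) := by
  have h := hasSum_coe_mul_geometric_of_norm_lt_one (show ‖x‖ < 1 by rwa [Real.norm_of_nonneg hx0])
  rw [← hasSum_nat_add_iff' 1] at h
  simpa using h

end geometric

section ceil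

variable {s x : ℝ}

noncomputable def ceilGenFun (s x : ℝ) : ℝ := ∑' n : ℕ, (⌈s * ((n : ℝ) + 1)⌉ : ℝ) * x ^ (n + 1)

lemma summable_ceil_mul_pow_succ (hs0 : 0 ≤ s) (hs1 : s ≤ 1) (hx0 : 0 ≤ x) (hx1 : x < 1) :
    Summable fun n : ℕ => (⌈s * ((n : ℝ) + 1)⌉ : ℝ) * x ^ (n + 1) := by
  refine (hasSum_succ_mul_pow_succ hx0 hx1).summable.of_nonneg_of_le (fun n => ?_) (fun n => ?_)
  · have : (0 : ℝ) ≤ ⌈s * ((n : ℝ) + 1)⌉ := by exact_mod_cast Int.ceil_nonneg (by positivity)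
    positivity
  · gcongr
    have : ⌈s * ((n : ℝ) + 1)⌉ ≤ (n : ℤ) + 1 := Int.ceil_le.mpr (by push_cast; nlinarith)
    exact_mod_cast this

lemma div_one_sub_le_ceilGenFun (hs0 : 0 < s) (hs1 : s ≤ 1) (hx0 : 0 ≤ x) (hx1 : x < 1) :
    x / (1 - x) ≤ ceilGenFun s x := by
  refine hasSum_le (fun n => ?_) (hasSum_pow_succ hx0 hx1)
    (summable_ceil_mul_pow_succ hs0.le hs1 hx0 hx1).hasSum
  have : (1 : ℝ) ≤ ⌈s * ((n : ℝ) + 1)⌉ := by exact_mod_cast Int.one_le_ceil_iff.mpr (by positivity)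
  nlinarith [pow_nonneg hx0 (n + 1)]

lemma ceilGenFun_le_div_one_sub_sq (hs0 : 0 ≤ s) (hs1 : s ≤ 1) (hx0 : 0 ≤ x) (hx1 : x < 1) :
    ceilGenFun s x ≤ x / (1 - x) ^ 2 := by
  refine hasSum_le (fun n => ?_) (summable_ceil_mul_pow_succ hs0 hs1 hx0 hx1).hasSum
    (hasSum_succ_mul_pow_succ hx0 hx1)
  gcongr
  have : ⌈s * ((n : ℝ) + 1)⌉ ≤ (n : ℤ) + 1 := Int.ceil_le.mpr (by push_cast; nlinarith)
  exact_mod_cast this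

lemma ceilGenFun_le (hs0 : 0 ≤ s) (hs1 : s ≤ 1) (hx0 : 0 ≤ x) (hx1 : x < 1) :
    ceilGenFun s x ≤ s * (x / (1 - x) ^ 2) + x / (1 - x) := by
  refine hasSum_le (fun n => ?_) (summable_ceil_mul_pow_succ hs0 hs1 hx0 hx1).hasSum
    (((hasSum_succ_mul_pow_succ hx0 hx1).mul_left s).add (hasSum_pow_succ hx0 hx1))
  have := Int.ceil_lt_add_one (s * ((n : ℝ) + 1))
  nlinarith [pow_nonneg hx0 (n + 1)]

lemma hasSum_upperWord_mul_pow_succ (α : ℝ) (hx0 : 0 ≤ x) (hx1 : x < 1) :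
    HasSum (fun n => (upperWord α n : ℝ) * x ^ (n + 1))
      ((⌈α⌉ - 1) * (x / (1 - x)) + (1 - x) * ceilGenFun (α - ⌈α⌉ + 1) x) := by
  have hs0 : 0 < α - ⌈α⌉ + 1 := by linarith [Int.ceil_lt_add_one α]
  have hs1 : α - ⌈α⌉ + 1 ≤ 1 := by linarith [Int.le_ceil α]
  have hceil := hasSum_sub_mul_pow_succ (c := fun n : ℕ => (⌈(α - ⌈α⌉ + 1) * n⌉ : ℝ)) (by simp)
    (by simpa using (summable_ceil_mul_pow_succ hs0.le hs1 hx0 hx1).hasSum)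
  simpa only [upperWord, ceilGenFun, Int.cast_add, Int.cast_sub, Int.cast_one, Nat.cast_add,
    Nat.cast_one, add_mul] using ((hasSum_pow_succ hx0 hx1).mul_left ((⌈α⌉ : ℝ) - 1)).add hceil

end ceil

lemma bounds_of_tsum_upperWord_eq_one {α β : ℝ} (hα : 0 < α) (hβ : 1 < β)
    (h : ∑' n : ℕ, (upperWord α n : ℝ) / β ^ (n + 1) = 1) :
    β ≤ ⌈α⌉ + 1 ∧ upperRoot (⌈α⌉ + 1) ≤ β ∧ β ≤ upperRoot (α + 2) := by
  set x := β⁻¹ with hx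
  have hx0 : 0 ≤ x := by positivity
  have hx1 : x < 1 := inv_lt_one_of_one_lt₀ hβ
  set s := α - ⌈α⌉ + 1
  have hs0 : 0 < s := by linarith [Int.ceil_lt_add_one α]
  have hs1 : s ≤ 1 := by linarith [Int.le_ceil α]
  have hB : (1 : ℝ) ≤ ⌈α⌉ := by exact_mod_cast Int.one_le_ceil_iff.mpr hα
  have heq : (⌈α⌉ - 1) * (x / (1 - x)) + (1 - x) * ceilGenFun s x = 1 := by
    refine (hasSum_upperWord_mul_pow_succ α hx0 hx1).tsum_eq.symm.trans (.trans ?_ h)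
    simp only [hx, inv_pow, div_eq_mul_inv]
  have hx1' : 0 < 1 - x := sub_pos.mpr hx1
  have hlow : x ≤ (1 - x) * ceilGenFun s x := by
    have := div_one_sub_le_ceilGenFun hs0 hs1 hx0 hx1
    rwa [div_le_iff₀ hx1', mul_comm] at this
  have hup : (1 - x) * ceilGenFun s x ≤ x / (1 - x) := by
    have := mul_le_mul_of_nonneg_left (ceilGenFun_le_div_one_sub_sq hs0.le hs1 hx0 hx1) hx1'.le
    rwa [sq, ← div_div, mul_div_cancel₀ _ hx1'.ne'] at this
  have hup_slope : (1 - x) * ceilGenFun s x ≤ s * (x / (1 - x)) + x := by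
    have := mul_le_mul_of_nonneg_left (ceilGenFun_le hs0.le hs1 hx0 hx1) hx1'.le
    rwa [mul_add, mul_left_comm, sq, ← div_div, mul_div_cancel₀ _ hx1'.ne',
      mul_div_cancel₀ _ hx1'.ne'] at this
  -- back to `β`, through `x / (1 - x) = (β - 1)⁻¹`
  have hxβ : x * β = 1 := inv_mul_cancel₀ (by positivity)
  have hqβ : x / (1 - x) * (β - 1) = 1 := by
    rw [hx]; field_simp [sub_ne_zero.mpr hβ.ne']
  refine ⟨?_, upperRoot_le (by linarith) hβ ?_, le_upperRoot (by linarith) ?_⟩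
  · have : 1 ≤ ⌈α⌉ * (x / (1 - x)) := by linarith
    nlinarith [mul_le_mul_of_nonneg_right this (by linarith : (0 : ℝ) ≤ β - 1)]
  · have : (⌈α⌉ - 1) * (x / (1 - x)) + x ≤ 1 := by linarith
    nlinarith [mul_le_mul_of_nonneg_right this (by positivity : (0 : ℝ) ≤ β * (β - 1))]
  · have : 1 ≤ α * (x / (1 - x)) + x := by linarith
    nlinarith [mul_le_mul_of_nonneg_right this (by positivity : (0 : ℝ) ≤ β * (β - 1))]

open Topology

namespace IsDevilStaircase

variable {Δ : ℝ → ℝ}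

lemma bounds (hΔ : IsDevilStaircase Δ) {α : ℝ} (hα : 0 < α) :
    1 < Δ α ∧ Δ α ≤ ⌈α⌉ + 1 ∧ upperRoot (⌈α⌉ + 1) ≤ Δ α ∧ Δ α ≤ upperRoot (α + 2) :=
  ⟨(hΔ.2 α hα).1.1, bounds_of_tsum_upperWord_eq_one hα (hΔ.2 α hα).1.1 (hΔ.2 α hα).1.2⟩

lemma tendsto_nhdsGT_intCast (hΔ : IsDevilStaircase Δ) {b : ℤ} (hb : 0 ≤ b) :
    Tendsto Δ (𝓝[>] (b : ℝ)) (𝓝 (upperRoot (b + 2))) := by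
  have hb' : (0 : ℝ) ≤ b := by exact_mod_cast hb
  have hroot : Tendsto (fun α => upperRoot (α + 2)) (𝓝[>] (b : ℝ)) (𝓝 (upperRoot (b + 2))) :=
    ((by fun_prop : Continuous fun α => upperRoot (α + 2)).tendsto _).mono_left nhdsWithin_le_nhds
  refine tendsto_of_tendsto_of_tendsto_of_le_of_le' tendsto_const_nhds hroot ?_ ?_
  all_goals filter_upwards [Ioo_mem_nhdsGT (lt_add_one (b : ℝ))] with α hα
  · have hceil : ⌈α⌉ = b + 1 := Int.ceil_eq_iff.mpr ⟨by push_cast; linarith [hα.1], by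
      push_cast; linarith [hα.2]⟩
    have := (hΔ.bounds (α := α) (by linarith [hα.1])).2.2.1
    rwa [hceil, Int.cast_add, Int.cast_one, add_assoc, one_add_one_eq_two] at this
  · exact (hΔ.bounds (α := α) (by linarith [hα.1])).2.2.2

lemma tendsto_sub_ceil_atTop (hΔ : IsDevilStaircase Δ) :
    Tendsto (fun α => Δ α - ⌈α⌉) atTop (𝓝 1) := by
  have hlow : Tendsto (fun α : ℝ => 1 - α⁻¹) atTop (𝓝 1) := by
    simpa using (tendsto_const_nhds (x := (1 : ℝ))).sub tendsto_inv_atTop_zero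
  refine tendsto_of_tendsto_of_tendsto_of_le_of_le' hlow tendsto_const_nhds ?_ ?_
  all_goals filter_upwards [eventually_ge_atTop 1] with α hα
  · obtain ⟨-, -, hroot, -⟩ := hΔ.bounds (by linarith)
    have hceil : α ≤ ⌈α⌉ := Int.le_ceil α
    calc 1 - α⁻¹ ≤ 1 - (⌈α⌉ : ℝ)⁻¹ := by gcongr
      _ ≤ upperRoot (⌈α⌉ + 1) - ⌈α⌉ := one_sub_inv_le_upperRoot_add_one_sub (by linarith)
      _ ≤ Δ α - ⌈α⌉ := by linarith
  · linarith [(hΔ.bounds (by linarith : (0 : ℝ) < α)).2.1]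

end IsDevilStaircase

/-- Limit values of the devil's staircase: (a) `Δ(α) → 1` as `α → 0⁺`;
(b) for every integer `b ≥ 1`, `Δ(x) → (b + 2 + √(b² + 4b))/2` as `x → b⁺`;
(c) `Δ(α) − ⌈α⌉ → 1` as `α → ∞`. -/
theorem devilStaircase_limits (Δ : ℝ → ℝ) (hΔ : IsDevilStaircase Δ) :
    Tendsto Δ (nhdsWithin 0 (Set.Ioi (0 : ℝ))) (nhds 1) ∧
    (∀ b : ℤ, 1 ≤ b →
      Tendsto Δ (nhdsWithin (b : ℝ) (Set.Ioi (b : ℝ)))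
        (nhds (((b : ℝ) + 2 + Real.sqrt ((b : ℝ) ^ 2 + 4 * (b : ℝ))) / 2))) ∧
    Tendsto (fun α : ℝ => Δ α - (⌈α⌉ : ℝ)) atTop (nhds 1) :=
  ⟨by simpa [upperRoot_two] using hΔ.tendsto_nhdsGT_intCast (b := 0) le_rfl,
    fun b hb => upperRoot_add_two (b : ℝ) ▸ hΔ.tendsto_nhdsGT_intCast (by omega),
    hΔ.tendsto_sub_ceil_atTop⟩
end
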